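/- arXiv:1708.02814 — 3 statements merged into one kernel-verified Lean document; each statement's English description precedes it below -/
import Mathlib

section
/- Let κ be regular uncountable with λ⁺ < κ, where λ is regular. Fix a bijection H : κ → 2^{λ⁺}, and define F : κ^κ → (2^κ)^{λ⁺} by F(f) = (f_γ)_{γ<λ⁺} with f_γ(α) = H(f(α))(γ). Then F is a continuous reduction of E^{κ,κ}_{λ-club} to the λ⁺-fold product relation Π_{λ⁺} E^{2,κ}_{λ-club}: that is, f E^{κ,κ}_{λ-club} g if and only if for every γ < λ⁺, f_γ E^{2,κ}_{λ-club} g_γ. -/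
/-!
A club avoiding the points of `S` where `f` and `g` differ also avoids those where the
coordinates `α ↦ H (f α) γ` and `α ↦ H (g α) γ` differ. Conversely, as `H` is injective,
`f α ≠ g α` means that some coordinate `γ < λ⁺` differs at `α`, so the disagreement set of `f, g`
is a union of `λ⁺` nonstationary sets, hence nonstationary: an intersection of fewer than `cf κ`
clubs is a club (close off under an `ω`-sequence of common bounds, which stays below `κ` as
`ℵ₀ < cf κ`). Continuity holds because fewer than `cf κ` bounds below `κ` have a common bound.
-/
namespace GDST
open Set

/-- `C` is unbounded in `κ`. -/
def unboundedIn (C : Set Ordinal) (κ : Ordinal) : Prop :=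
  ∀ α < κ, ∃ β ∈ C, α ≤ β ∧ β < κ

/-- `C` is closed in `κ`: any `α < κ` which is a limit of elements of `C` belongs to `C`. -/
def closedIn (C : Set Ordinal) (κ : Ordinal) : Prop :=
  ∀ α < κ, 0 < α → (∀ β < α, ∃ γ ∈ C, β ≤ γ ∧ γ < α) → α ∈ C

/-- `C` is a club (closed unbounded) subset of `κ`. -/
def clubIn (C : Set Ordinal) (κ : Ordinal) : Prop := unboundedIn C κ ∧ closedIn C κ

/-- `S` is stationary in `κ`: it meets every club of `κ`. -/
def stationaryIn (S : Set Ordinal) (κ : Ordinal) : Prop :=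
  ∀ C, clubIn C κ → (S ∩ C).Nonempty

/-- `S^κ_μ`, the set of ordinals below `κ` of cofinality `μ`. -/
def cofSet (κ : Ordinal) (μ : Cardinal) : Set Ordinal := {α | α < κ ∧ Ordinal.cof α = μ}

/-- `α` is an (infinite) regular cardinal. -/
def isRegOrd (α : Ordinal) : Prop := Cardinal.aleph0 ≤ α.cof ∧ α.cof.ord = α

/-- `reg(κ)`, the set of regular cardinals below `κ`. -/
def regSet (κ : Ordinal) : Set Ordinal := {α | α < κ ∧ isRegOrd α}

/-- The equivalence modulo the nonstationary ideal restricted to `S`, on `κ^κ`. -/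
def Ediff (κ : Ordinal) (S : Set Ordinal) (η ξ : Ordinal → Ordinal) : Prop :=
  ¬ stationaryIn ({α | α < κ ∧ η α ≠ ξ α} ∩ S) κ

/-- The equivalence modulo the nonstationary ideal restricted to `S`, on `2^κ`. -/
def Ediff2 (κ : Ordinal) (S : Set Ordinal) (η ξ : Ordinal → Bool) : Prop :=
  ¬ stationaryIn ({α | α < κ ∧ η α ≠ ξ α} ∩ S) κ

/-- Continuity in the bounded topology, for `F : κ^κ → κ^κ`. -/
def contFunKK (κ : Ordinal) (F : (Ordinal → Ordinal) → (Ordinal → Ordinal)) : Prop :=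
  ∀ η, ∀ α < κ, ∃ β < κ, ∀ ξ, (∀ γ < β, ξ γ = η γ) → ∀ γ < α, F ξ γ = F η γ

def contFunK2 (κ : Ordinal) (F : (Ordinal → Ordinal) → (Ordinal → Bool)) : Prop :=
  ∀ η, ∀ α < κ, ∃ β < κ, ∀ ξ, (∀ γ < β, ξ γ = η γ) → ∀ γ < α, F ξ γ = F η γ

def contFun22 (κ : Ordinal) (F : (Ordinal → Bool) → (Ordinal → Bool)) : Prop :=
  ∀ η, ∀ α < κ, ∃ β < κ, ∀ ξ, (∀ γ < β, ξ γ = η γ) → ∀ γ < α, F ξ γ = F η γ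

/-- Continuous reducibility for relations on `κ^κ`. -/
def contRedKK (κ : Ordinal)
    (E₁ E₂ : (Ordinal → Ordinal) → (Ordinal → Ordinal) → Prop) : Prop :=
  ∃ F, contFunKK κ F ∧ ∀ η ξ, E₁ η ξ ↔ E₂ (F η) (F ξ)

def contRedK2 (κ : Ordinal)
    (E₁ : (Ordinal → Ordinal) → (Ordinal → Ordinal) → Prop)
    (E₂ : (Ordinal → Bool) → (Ordinal → Bool) → Prop) : Prop :=
  ∃ F, contFunK2 κ F ∧ ∀ η ξ, E₁ η ξ ↔ E₂ (F η) (F ξ)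

def contRed22 (κ : Ordinal)
    (E₁ E₂ : (Ordinal → Bool) → (Ordinal → Bool) → Prop) : Prop :=
  ∃ F, contFun22 κ F ∧ ∀ η ξ, E₁ η ξ ↔ E₂ (F η) (F ξ)

/-- `X` strongly reflects to `Y`. -/
def stronglyReflects (κ : Ordinal) (X Y : Set Ordinal) : Prop :=
  ∀ Z ⊆ X, stationaryIn Z κ →
    stationaryIn {α | α ∈ Y ∧ stationaryIn (Z ∩ Set.Iio α) α} κ

/-- `D` witnesses that `X` ⋄-reflects to `Y`. -/
def diamondWitness (κ : Ordinal) (X Y : Set Ordinal) (D : Ordinal → Set Ordinal) : Prop :=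
  (∀ α ∈ Y, D α ⊆ Set.Iio α ∧ stationaryIn (D α) α) ∧
  ∀ Z ⊆ X, stationaryIn Z κ → stationaryIn {α | α ∈ Y ∧ D α = Z ∩ Set.Iio α} κ

/-- `X` ⋄-reflects to `Y`. -/
def diamondReflects (κ : Ordinal) (X Y : Set Ordinal) : Prop :=
  ∃ D, diamondWitness κ X Y D

/-- `f` witnesses the `S`-dual diamond on `κ`. -/
def dualDiamondWitness (κ : Ordinal) (S : Set Ordinal)
    (f : Ordinal → Ordinal → Ordinal) : Prop :=
  (∀ α, ∀ β < α, f α β < α) ∧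
  ∀ Z ⊆ S, stationaryIn Z κ → ∀ g : Ordinal → Ordinal,
    stationaryIn
      {α | α ∈ regSet κ ∧ (∀ β < α, g β = f α β) ∧ stationaryIn (Z ∩ Set.Iio α) α} κ

/-- `κ` has the `S`-dual diamond. -/
def dualDiamond (κ : Ordinal) (S : Set Ordinal) : Prop :=
  ∃ f, dualDiamondWitness κ S f

end GDST

namespace GDST

/-- Continuity of `F : κ^κ → (2^κ)^{λ⁺}` with respect to the box topology on the
`λ⁺`-fold product. -/
def contFunProd (κ lp : Ordinal)
    (F : (Ordinal → Ordinal) → Ordinal → Ordinal → Bool) : Prop :=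
  ∀ η, ∀ a : Ordinal → Ordinal, (∀ γ < lp, a γ < κ) →
    ∃ β < κ, ∀ ξ, (∀ δ < β, ξ δ = η δ) →
      ∀ γ < lp, ∀ δ < a γ, F ξ γ δ = F η γ δ

universe u w

open Cardinal

section Clubs

variable {κ : Ordinal.{u}} {ι : Type w} {C : ι → Set Ordinal.{u}}

theorem closedIn_iInter (hC : ∀ i, closedIn (C i) κ) : closedIn (⋂ i, C i) κ := by
  intro α hα hα₀ hlim
  refine Set.mem_iInter.2 fun i => (hC i) α hα hα₀ fun β hβ => ?_
  obtain ⟨γ, hγ, hβγ, hγα⟩ := hlim β hβ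
  exact ⟨γ, Set.mem_iInter.1 hγ i, hβγ, hγα⟩

theorem exists_lt_forall_exists_mem_Ico
    (hι : lift.{u} #ι < lift.{w} κ.cof) (hC : ∀ i, unboundedIn (C i) κ)
    {β : Ordinal} (hβ : β < κ) : ∃ β' < κ, ∀ i, ∃ γ ∈ C i, β ≤ γ ∧ γ < β' := by
  choose p hpC hβp hpκ using fun i => hC i β hβ
  have hbdd : BddAbove (Set.range fun i => p i + 1) :=
    ⟨κ, Set.forall_mem_range.2 fun i => Order.add_one_le_of_lt (hpκ i)⟩
  refine ⟨⨆ i, p i + 1, Ordinal.lift_iSup_add_one_lt_of_lt_cof (by rwa [← Ordinal.lift_cof]) hpκ,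
    fun i => ⟨p i, hpC i, hβp i, (Order.lt_add_one_iff.2 le_rfl).trans_le (le_ciSup hbdd i)⟩⟩

theorem unboundedIn_iInter (hκ : ℵ₀ < κ.cof)
    (hι : lift.{u} #ι < lift.{w} κ.cof) (hC : ∀ i, clubIn (C i) κ) :
    unboundedIn (⋂ i, C i) κ := by
  intro α hα
  choose! next hnextκ hnext using fun β (hβ : β < κ) =>
    exists_lt_forall_exists_mem_Ico hι (fun i => (hC i).1) hβ
  set s : ℕ → Ordinal := fun n => next^[n] α
  have hsκ : ∀ n, s n < κ := fun n => by
    induction n with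
    | zero => exact hα
    | succ n ih => simpa only [s, Function.iterate_succ_apply'] using hnextκ _ ih
  have hsucc : ∀ n, s (n + 1) = next (s n) := fun n => Function.iterate_succ_apply' ..
  have hβκ : ⨆ n, s n < κ :=
    Ordinal.lift_iSup_lt_of_lt_cof (by simpa [← Ordinal.lift_cof] using hκ) hsκ
  refine ⟨⨆ n, s n, Set.mem_iInter.2 fun i => ?_, Ordinal.le_iSup s 0, hβκ⟩
  have hstep : ∀ n, ∃ γ ∈ C i, s n ≤ γ ∧ γ < ⨆ n, s n := fun n => by
    obtain ⟨γ, hγ, hnγ, hγn⟩ := hnext (s n) (hsκ n) i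
    exact ⟨γ, hγ, hnγ, hγn.trans_le ((hsucc n).ge.trans (Ordinal.le_iSup s _))⟩
  refine (hC i).2 _ hβκ ?_ fun δ hδ => ?_
  · obtain ⟨γ, -, -, hγ⟩ := hstep 0
    exact hγ.pos
  · obtain ⟨n, hn⟩ := Ordinal.lt_iSup_iff.1 hδ
    obtain ⟨γ, hγ, hnγ, hγβ⟩ := hstep n
    exact ⟨γ, hγ, hn.le.trans hnγ, hγβ⟩

theorem clubIn_iInter (hκ : ℵ₀ < κ.cof)
    (hι : lift.{u} #ι < lift.{w} κ.cof) (hC : ∀ i, clubIn (C i) κ) :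
    clubIn (⋂ i, C i) κ :=
  ⟨unboundedIn_iInter hκ hι hC, closedIn_iInter fun i => (hC i).2⟩

theorem stationaryIn.mono {Z Z' : Set Ordinal.{u}} (h : Z ⊆ Z') (hZ : stationaryIn Z κ) :
    stationaryIn Z' κ := fun C hC => (hZ C hC).mono (Set.inter_subset_inter_left C h)

theorem not_stationaryIn_iUnion {Z : ι → Set Ordinal.{u}} (hκ : ℵ₀ < κ.cof)
    (hι : lift.{u} #ι < lift.{w} κ.cof) (hZ : ∀ i, ¬ stationaryIn (Z i) κ) :
    ¬ stationaryIn (⋃ i, Z i) κ := by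
  simp only [stationaryIn, not_forall, Set.not_nonempty_iff_eq_empty] at hZ
  choose C hC hZC using hZ
  intro hstat
  obtain ⟨α, hαZ, hαC⟩ := hstat _ (clubIn_iInter hκ hι hC)
  obtain ⟨i, hi⟩ := Set.mem_iUnion.1 hαZ
  exact (hZC i).subset ⟨hi, Set.mem_iInter.1 hαC i⟩

end Clubs

theorem lift_mk_Iio_lt_lift_cof {κ o : Ordinal.{u}} (ho : o.card < κ.cof) :
    lift.{u} #(Set.Iio o) < lift.{u + 1} κ.cof := by
  rwa [mk_Iio_ordinal, lift_lift, lift_lt]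

theorem contFunProd_of_card_lt_cof {κ lp : Ordinal.{u}} (hlp : lp.card < κ.cof)
    (H : Ordinal → Ordinal → Bool) : contFunProd κ lp (fun f γ α => H (f α) γ) := by
  intro η a ha
  have hbdd : BddAbove (Set.range fun γ : Set.Iio lp => a γ) :=
    ⟨κ, Set.forall_mem_range.2 fun γ => (ha γ γ.2).le⟩
  refine ⟨⨆ γ : Set.Iio lp, a γ, Ordinal.lift_iSup_lt_of_lt_cof
    (by rw [← Ordinal.lift_cof]; exact lift_mk_Iio_lt_lift_cof hlp) fun γ => ha γ γ.2, ?_⟩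
  intro ξ hξ γ hγ δ hδ
  simp only [hξ δ (hδ.trans_le (le_ciSup hbdd ⟨γ, hγ⟩))]

theorem ediff_iff_forall_ediff2 {κ lp : Ordinal.{u}} {S : Set Ordinal.{u}}
    {H : Ordinal → Ordinal → Bool} {f g : Ordinal → Ordinal}
    (hκ : ℵ₀ < κ.cof) (hlp : lp.card < κ.cof)
    (Hinj : ∀ β < κ, ∀ β' < κ, (∀ γ < lp, H β γ = H β' γ) → β = β')
    (hf : ∀ α < κ, f α < κ) (hg : ∀ α < κ, g α < κ) :
    Ediff κ S f g ↔ ∀ γ < lp, Ediff2 κ S (fun α => H (f α) γ) (fun α => H (g α) γ) := by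
  refine ⟨fun h γ _ hstat => h (hstat.mono ?_), fun h hstat => ?_⟩
  · rintro α ⟨⟨hα, hne⟩, hS⟩
    exact ⟨⟨hα, fun hfg => hne (congrArg (H · γ) hfg)⟩, hS⟩
  refine not_stationaryIn_iUnion hκ (lift_mk_Iio_lt_lift_cof hlp)
    (fun γ : Set.Iio lp => h γ γ.2) (hstat.mono ?_)
  rintro α ⟨⟨hα, hne⟩, hS⟩
  obtain ⟨γ, hγ, hHne⟩ : ∃ γ < lp, H (f α) γ ≠ H (g α) γ := by
    by_contra! hall
    exact hne (Hinj _ (hf α hα) _ (hg α hα) hall)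
  exact Set.mem_iUnion.2 ⟨⟨γ, hγ⟩, ⟨hα, hHne⟩, hS⟩

theorem prod_reduction_general (κ l : Cardinal) (hκreg : κ.IsRegular)
    (hκunc : Cardinal.aleph0 < κ) (hlp : (Order.succ l).ord < κ.ord)
    (H : Ordinal → Ordinal → Bool)
    (Hinj : ∀ β < κ.ord, ∀ β' < κ.ord,
      (∀ γ < (Order.succ l).ord, H β γ = H β' γ) → β = β') :
    contFunProd κ.ord (Order.succ l).ord (fun f γ α => H (f α) γ) ∧
    ∀ f g : Ordinal → Ordinal, (∀ α < κ.ord, f α < κ.ord) → (∀ α < κ.ord, g α < κ.ord) →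
      (Ediff κ.ord (cofSet κ.ord l) f g ↔
        ∀ γ < (Order.succ l).ord,
          Ediff2 κ.ord (cofSet κ.ord l) (fun α => H (f α) γ) (fun α => H (g α) γ)) := by
  have hκ : ℵ₀ < κ.ord.cof := by rwa [hκreg.cof_ord]
  have hlp' : (Order.succ l).ord.card < κ.ord.cof := by
    rwa [card_ord, hκreg.cof_ord, ← ord_lt_ord]
  exact ⟨contFunProd_of_card_lt_cof hlp' H,
    fun f g hf hg => ediff_iff_forall_ediff2 hκ hlp' Hinj hf hg⟩

/-- Given a bijection `H : κ → 2^{λ⁺}`, the map `f ↦ (γ ↦ (α ↦ H(f α) γ))` is a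
continuous reduction of `E^{κ,κ}_{λ-club}` to `Π_{λ⁺} E^{2,κ}_{λ-club}`. -/
theorem prod_reduction (κ l : Cardinal) (hκreg : κ.IsRegular)
    (hκunc : Cardinal.aleph0 < κ) (hpow : Cardinal.powerlt κ κ = κ)
    (hlreg : l.IsRegular) (hlp : (Order.succ l).ord < κ.ord)
    (H : Ordinal → Ordinal → Bool)
    (Hinj : ∀ β < κ.ord, ∀ β' < κ.ord,
      (∀ γ < (Order.succ l).ord, H β γ = H β' γ) → β = β')
    (Hsurj : ∀ s : Ordinal → Bool, ∃ β < κ.ord, ∀ γ < (Order.succ l).ord, H β γ = s γ) :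
    contFunProd κ.ord (Order.succ l).ord (fun f γ α => H (f α) γ) ∧
    ∀ f g : Ordinal → Ordinal, (∀ α < κ.ord, f α < κ.ord) → (∀ α < κ.ord, g α < κ.ord) →
      (Ediff κ.ord (cofSet κ.ord l) f g ↔
        ∀ γ < (Order.succ l).ord,
          Ediff2 κ.ord (cofSet κ.ord l) (fun α => H (f α) γ) (fun α => H (g α) γ)) :=
  prod_reduction_general κ l hκreg hκunc hlp H Hinj

end GDST
end

section
/- For every stationary S ⊆ κ (κ regular uncountable), the relation E^{2,κ}_S is continuously reducible to NS, the equivalence on 2^κ modulo the non-stationary ideal, via the map F(η)(α) = η(α) if α ∈ S and F(η)(α) = 1 otherwise. -/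
namespace GDST

/-- Equivalence modulo the nonstationary ideal on `2^κ`. -/
def NSrel (κ : Ordinal) (η ξ : Ordinal → Bool) : Prop :=
  ¬ stationaryIn {α | α < κ ∧ η α ≠ ξ α} κ

theorem contFun22_of_pointwise (κ : Ordinal) (f : Ordinal → Bool → Bool) :
    contFun22 κ (fun η α => f α (η α)) :=
  fun _ α hα => ⟨α, hα, fun _ hξ γ hγ => congrArg (f γ) (hξ γ hγ)⟩

theorem setOf_lt_and_ite_ne_eq_inter {β : Type*} (κ : Ordinal) (S : Set Ordinal)
    [DecidablePred (· ∈ S)] (η ξ : Ordinal → β) (c : β) :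
    {α | α < κ ∧ (if α ∈ S then η α else c) ≠ (if α ∈ S then ξ α else c)} =
      {α | α < κ ∧ η α ≠ ξ α} ∩ S := by
  ext α
  by_cases hα : α ∈ S <;> simp [hα]

theorem Ediff2_contRed_NS_general (κ : Cardinal) (S : Set Ordinal) :
    contFun22 κ.ord
      (fun η α => @ite _ (α ∈ S) (Classical.propDecidable _) (η α) true) ∧
    ∀ η ξ : Ordinal → Bool,
      Ediff2 κ.ord S η ξ ↔
        NSrel κ.ord (fun α => @ite _ (α ∈ S) (Classical.propDecidable _) (η α) true)
          (fun α => @ite _ (α ∈ S) (Classical.propDecidable _) (ξ α) true) := by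
  classical
  refine ⟨contFun22_of_pointwise κ.ord fun α b => if α ∈ S then b else true, fun η ξ => ?_⟩
  rw [NSrel, setOf_lt_and_ite_ne_eq_inter, Ediff2]

/-- For every stationary `S ⊆ κ`, the map `F(η)(α) = η(α)` for `α ∈ S`, `= 1`
otherwise, is a continuous reduction of `E^{2,κ}_S` to `NS`. -/
theorem Ediff2_contRed_NS (κ : Cardinal) (hκreg : κ.IsRegular)
    (hκunc : Cardinal.aleph0 < κ) (S : Set Ordinal) (hSsub : S ⊆ Set.Iio κ.ord)
    (hS : stationaryIn S κ.ord) :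
    contFun22 κ.ord
      (fun η α => @ite _ (α ∈ S) (Classical.propDecidable _) (η α) true) ∧
    ∀ η ξ : Ordinal → Bool,
      Ediff2 κ.ord S η ξ ↔
        NSrel κ.ord (fun α => @ite _ (α ∈ S) (Classical.propDecidable _) (η α) true)
          (fun α => @ite _ (α ∈ S) (Classical.propDecidable _) (ξ α) true) :=
  Ediff2_contRed_NS_general κ S

end GDST
end

section
/- Let κ be inaccessible and let ⟨A^f_i⟩_{i≤κ} be the increasing chain of structures in K built from f : κ → reg(κ) as in the paper, where at each limit stage i a copy of ℚ × f(i)* (ℚ ordered rationals times f(i) with reversed order, ordered antilexicographically) is appended on top together with a new point of C. If f, g : κ → reg(κ) agree on a club of κ, then the resulting dense linear orders A^f = (L^{A^f_κ}, <) and A^g = (L^{A^g_κ}, <) are isomorphic. -/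
namespace GDST

universe u

/-- A structure in the vocabulary `{L, C, <, R}`. -/
structure KStr (U : Type u) where
  L : Set U
  C : Set U
  lt : U → U → Prop
  R : U → U → Prop

namespace KStr

variable {U : Type u}

/-- The domain of the structure. -/
def dom (A : KStr U) : Set U := A.L ∪ A.C

/-- Membership in the class `K`: `L` and `C` are disjoint, `<` is a dense linear
order without endpoints on `L`, `R ⊆ L × C`, and for every `x ∈ C`, `R(·,x)`
determines a cut of `L`: a nonempty lower set without a largest element whose
(nonempty) complement has no least element. -/
def memK (A : KStr U) : Prop :=
  (A.L ∩ A.C = ∅) ∧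
  (∀ x y, A.lt x y → x ∈ A.L ∧ y ∈ A.L) ∧
  (∀ x ∈ A.L, ¬ A.lt x x) ∧
  (∀ x y z, A.lt x y → A.lt y z → A.lt x z) ∧
  (∀ x ∈ A.L, ∀ y ∈ A.L, x ≠ y → A.lt x y ∨ A.lt y x) ∧
  (∀ x y, A.lt x y → ∃ z, A.lt x z ∧ A.lt z y) ∧
  (∀ x ∈ A.L, ∃ y, A.lt x y) ∧
  (∀ x ∈ A.L, ∃ y, A.lt y x) ∧
  (∀ x y, A.R x y → x ∈ A.L ∧ y ∈ A.C) ∧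
  (∀ y ∈ A.C,
    (∃ x, A.R x y) ∧
    (∃ x ∈ A.L, ¬ A.R x y) ∧
    (∀ x, A.R x y → ∃ z, A.R z y ∧ A.lt x z) ∧
    (∀ x ∈ A.L, ¬ A.R x y → ∃ z ∈ A.L, ¬ A.R z y ∧ A.lt z x) ∧
    (∀ x z, A.R z y → A.lt x z → A.R x y))

/-- The strong substructure relation `A ⪯ B` on `K`. -/
def strongSub (A B : KStr U) : Prop :=
  A.L ⊆ B.L ∧ A.C ⊆ B.C ∧
  (∀ x ∈ A.L, ∀ y ∈ A.L, (A.lt x y ↔ B.lt x y)) ∧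
  (∀ x ∈ A.L, ∀ y ∈ A.C, (A.R x y ↔ B.R x y)) ∧
  (∀ y ∈ A.C, ∀ x, (B.R x y ↔ x ∈ B.L ∧ ∃ z, A.R z y ∧ B.lt x z)) ∧
  (∀ y ∈ A.C, ∀ x ∈ B.L, (¬ B.R x y ↔ ∃ z ∈ A.L, ¬ A.R z y ∧ B.lt z x)) ∧
  (∀ y ∈ B.C, y ∉ A.C → ∃ u v, B.R u y ∧ v ∈ B.L ∧ ¬ B.R v y ∧
    ∀ a ∈ A.L, B.lt a u ∨ B.lt v a)

end KStr

end GDST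

namespace GDST

namespace KStr

/-- The union of (an initial segment of) a chain of structures. -/
def unionChain (A : Ordinal → KStr Ordinal) (i : Ordinal) : KStr Ordinal where
  L := ⋃ j ∈ Set.Iio i, (A j).L
  C := ⋃ j ∈ Set.Iio i, (A j).C
  lt := fun x y => ∃ j < i, (A j).lt x y
  R := fun x y => ∃ j < i, (A j).R x y

/-- Pushforward of a structure along a map. -/
def mapK (F : Ordinal → Ordinal) (A : KStr Ordinal) : KStr Ordinal where
  L := F '' A.L
  C := F '' A.C
  lt := fun x y => ∃ a ∈ A.L, ∃ b ∈ A.L, F a = x ∧ F b = y ∧ A.lt a b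
  R := fun x y => ∃ a ∈ A.L, ∃ b ∈ A.C, F a = x ∧ F b = y ∧ A.R a b

end KStr

/-- `B`, linearly ordered by `lt'`, is order isomorphic to `ℚ × δ*`, i.e. to
`ℚ × δ` where `δ` carries the reversed order, ordered antilexicographically. -/
def isQtimesRevBlock (lt' : Ordinal.{0} → Ordinal.{0} → Prop) (B : Set Ordinal.{0})
    (δ : Ordinal.{0}) : Prop :=
  ∃ e : Ordinal.{0} → ℚ × Ordinal.{0}, Set.BijOn e B {p : ℚ × Ordinal.{0} | p.2 < δ} ∧
    ∀ x ∈ B, ∀ y ∈ B,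
      (lt' x y ↔ ((e y).2 < (e x).2 ∨ ((e x).2 = (e y).2 ∧ (e x).1 < (e y).1)))

open KStr in
/-- The specification of the chain `⟨A^f_i⟩_{i ≤ κ}` of structures in `K` built
from `f : κ → reg(κ)` as in the paper: a continuous `⪯`-increasing chain of
structures of size `< κ`, starting from `(ℚ, ∅)`, appending at each limit stage
`i < κ` a block `ℚ × f(i)*` on top together with one new `C`-point cutting above
everything old, and realizing (cofinally) every small strong extension of every
stage. -/
def chainSpec (κ : Ordinal) (f : Ordinal → Ordinal)
    (A : Ordinal → KStr Ordinal) : Prop :=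
  (∀ i ≤ κ, memK (A i)) ∧
  (∀ i j, i < j → j ≤ κ → strongSub (A i) (A j)) ∧
  (∀ i < κ, Cardinal.mk (dom (A i)) < Cardinal.lift.{1,0} κ.card) ∧
  ((A 0).C = ∅ ∧ isQtimesRevBlock (A 0).lt (A 0).L 1) ∧
  (∀ i < κ, Order.IsSuccLimit i →
    (∃ x, x ∉ (unionChain A i).C ∧ (A i).C = (unionChain A i).C ∪ {x} ∧
      ∀ y, ((A i).R y x ↔ y ∈ (unionChain A i).L)) ∧
    (∀ b ∈ (A i).L \ (unionChain A i).L, ∀ a ∈ (unionChain A i).L, (A i).lt a b) ∧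
    isQtimesRevBlock (A i).lt ((A i).L \ (unionChain A i).L) (f i)) ∧
  ((A κ).L = (unionChain A κ).L ∧ (A κ).C = (unionChain A κ).C) ∧
  (∀ i < κ, ∀ Cs : KStr Ordinal, memK Cs → strongSub (A i) Cs →
    Cardinal.mk (dom Cs) < Cardinal.lift.{1,0} κ.card →
    ∃ j, i ≤ j ∧ j < κ ∧ ∃ F : Ordinal → Ordinal,
      Set.InjOn F (dom Cs) ∧ Set.EqOn F id (dom (A i)) ∧
      strongSub (mapK F Cs) (A j))

end GDST

/-
Back and forth along the club `Cl`. A state is a strong embedding of a stage `A^f_i` into a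
stage `A^g_j` with `j ∈ Cl`. At a successor step, richness of the chains first gives a left
inverse of the current embedding into a later stage of `A^f`, and then a left inverse of that
into a later stage of `A^g`; the latter extends the current embedding and its range covers the
old target. At a limit step the union of the embeddings so far is an isomorphism between the
unions of the two chains below `δ`, the supremum of the stages reached. As a limit of points
of `Cl`, `δ` is in `Cl`, so `f δ = g δ`; hence the blocks `ℚ × f(δ)*` and `ℚ × g(δ)*` appended
at stage `δ` are order isomorphic, and the isomorphism extends to one of `A^f_δ` onto `A^g_δ`.
After `κ` steps the union of all the embeddings is an isomorphism of `A^f_κ` onto `A^g_κ`.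
-/

universe u

namespace GDST

open Set Function

namespace KStr

section Axioms

variable {U : Type*} {A B C : KStr U} {x y z : U}

theorem memK.mem_L_of_lt (hA : memK A) (h : A.lt x y) : x ∈ A.L ∧ y ∈ A.L := hA.2.1 x y h

theorem memK.lt_irrefl (hA : memK A) (x : U) : ¬ A.lt x x := fun h =>
  hA.2.2.1 x (hA.mem_L_of_lt h).1 h

theorem memK.lt_trans (hA : memK A) : A.lt x y → A.lt y z → A.lt x z := hA.2.2.2.1 x y z

theorem memK.lt_asymm (hA : memK A) (h : A.lt x y) : ¬ A.lt y x := fun h' =>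
  hA.lt_irrefl x (hA.lt_trans h h')

theorem memK.lt_or_gt_of_ne (hA : memK A) (hx : x ∈ A.L) (hy : y ∈ A.L) (hne : x ≠ y) :
    A.lt x y ∨ A.lt y x := hA.2.2.2.2.1 x hx y hy hne

theorem memK.exists_between (hA : memK A) (h : A.lt x y) : ∃ z, A.lt x z ∧ A.lt z y :=
  hA.2.2.2.2.2.1 x y h

theorem memK.exists_gt (hA : memK A) (hx : x ∈ A.L) : ∃ y, A.lt x y := hA.2.2.2.2.2.2.1 x hx

theorem memK.exists_lt (hA : memK A) (hx : x ∈ A.L) : ∃ y, A.lt y x := hA.2.2.2.2.2.2.2.1 x hx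

theorem memK.mem_of_R (hA : memK A) (h : A.R x y) : x ∈ A.L ∧ y ∈ A.C :=
  hA.2.2.2.2.2.2.2.2.1 x y h

theorem memK.cut (hA : memK A) (hy : y ∈ A.C) :
    (∃ x, A.R x y) ∧ (∃ x ∈ A.L, ¬ A.R x y) ∧ (∀ x, A.R x y → ∃ z, A.R z y ∧ A.lt x z) ∧
      (∀ x ∈ A.L, ¬ A.R x y → ∃ z ∈ A.L, ¬ A.R z y ∧ A.lt z x) ∧
      (∀ x z, A.R z y → A.lt x z → A.R x y) :=
  hA.2.2.2.2.2.2.2.2.2 y hy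

theorem memK.notMem_C (hA : memK A) (hx : x ∈ A.L) : x ∉ A.C := fun hC =>
  (eq_empty_iff_forall_notMem.1 hA.1 x) ⟨hx, hC⟩

theorem strongSub.L_subset (h : strongSub A B) : A.L ⊆ B.L := h.1

theorem strongSub.C_subset (h : strongSub A B) : A.C ⊆ B.C := h.2.1

theorem strongSub.dom_subset (h : strongSub A B) : dom A ⊆ dom B :=
  union_subset_union h.L_subset h.C_subset

theorem strongSub.lt_iff (h : strongSub A B) (hx : x ∈ A.L) (hy : y ∈ A.L) :
    A.lt x y ↔ B.lt x y := h.2.2.1 x hx y hy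

theorem strongSub.R_iff (h : strongSub A B) (hx : x ∈ A.L) (hy : y ∈ A.C) :
    A.R x y ↔ B.R x y := h.2.2.2.1 x hx y hy

theorem strongSub.R_iff_exists (h : strongSub A B) (hy : y ∈ A.C) :
    B.R x y ↔ x ∈ B.L ∧ ∃ z, A.R z y ∧ B.lt x z := h.2.2.2.2.1 y hy x

theorem strongSub.not_R_iff_exists (h : strongSub A B) (hy : y ∈ A.C) (hx : x ∈ B.L) :
    ¬ B.R x y ↔ ∃ z ∈ A.L, ¬ A.R z y ∧ B.lt z x := h.2.2.2.2.2.1 y hy x hx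

theorem strongSub.exists_bounds_of_notMem (h : strongSub A B) (hy : y ∈ B.C) (hyA : y ∉ A.C) :
    ∃ u v, B.R u y ∧ v ∈ B.L ∧ ¬ B.R v y ∧ ∀ a ∈ A.L, B.lt a u ∨ B.lt v a :=
  h.2.2.2.2.2.2 y hy hyA

theorem strongSub_refl (hA : memK A) : strongSub A A := by
  refine ⟨Subset.rfl, Subset.rfl, fun _ _ _ _ => Iff.rfl, fun _ _ _ _ => Iff.rfl,
    fun y hy x => ⟨fun hR => ⟨(hA.mem_of_R hR).1, (hA.cut hy).2.2.1 x hR⟩, ?_⟩,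
    fun y hy x hx => ⟨(hA.cut hy).2.2.2.1 x hx, ?_⟩, fun y hy hy' => absurd hy hy'⟩
  · rintro ⟨-, z, hz, hlt⟩
    exact (hA.cut hy).2.2.2.2 x z hz hlt
  · rintro ⟨z, -, hz, hlt⟩ hR
    exact hz ((hA.cut hy).2.2.2.2 z x hR hlt)

theorem strongSub.trans (hA : memK A) (hB : memK B) (hC : memK C)
    (hAB : strongSub A B) (hBC : strongSub B C) : strongSub A C := by
  refine ⟨hAB.L_subset.trans hBC.L_subset, hAB.C_subset.trans hBC.C_subset,
    fun x hx y hy => (hAB.lt_iff hx hy).trans (hBC.lt_iff (hAB.L_subset hx) (hAB.L_subset hy)),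
    fun x hx y hy => (hAB.R_iff hx hy).trans (hBC.R_iff (hAB.L_subset hx) (hAB.C_subset hy)),
    fun y hy x => ?_, fun y hy x hx => ?_, fun y hy hyA => ?_⟩
  · rw [hBC.R_iff_exists (hAB.C_subset hy)]
    constructor
    · rintro ⟨hx, z, hz, hxz⟩
      obtain ⟨hzB, w, hw, hzw⟩ := (hAB.R_iff_exists hy).1 hz
      have hwB := (hB.mem_L_of_lt hzw).2
      exact ⟨hx, w, hw, hC.lt_trans hxz ((hBC.lt_iff hzB hwB).1 hzw)⟩
    · rintro ⟨hx, z, hz, hxz⟩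
      exact ⟨hx, z, (hAB.R_iff (hA.mem_of_R hz).1 hy).1 hz, hxz⟩
  · rw [hBC.not_R_iff_exists (hAB.C_subset hy) hx]
    constructor
    · rintro ⟨z, hzB, hz, hzx⟩
      obtain ⟨w, hwA, hw, hwz⟩ := (hAB.not_R_iff_exists hy hzB).1 hz
      exact ⟨w, hwA, hw, hC.lt_trans ((hBC.lt_iff (hAB.L_subset hwA) hzB).1 hwz) hzx⟩
    · rintro ⟨z, hzA, hz, hzx⟩
      exact ⟨z, hAB.L_subset hzA, fun h => hz ((hAB.R_iff hzA hy).2 h), hzx⟩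
  · by_cases hyB : y ∈ B.C
    · obtain ⟨u, v, hu, hv, hvy, hbd⟩ := hAB.exists_bounds_of_notMem hyB hyA
      have huB := (hB.mem_of_R hu).1
      refine ⟨u, v, (hBC.R_iff huB hyB).1 hu, hBC.L_subset hv,
        fun h => hvy ((hBC.R_iff hv hyB).2 h), fun a ha => ?_⟩
      exact (hbd a ha).imp (hBC.lt_iff (hAB.L_subset ha) huB).1
        (hBC.lt_iff hv (hAB.L_subset ha)).1
    · obtain ⟨u, v, hu, hv, hvy, hbd⟩ := hBC.exists_bounds_of_notMem hy hyB
      exact ⟨u, v, hu, hv, hvy, fun a ha => hbd a (hAB.L_subset ha)⟩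

end Axioms

attribute [ext] KStr

section Map

variable {A B X Y : KStr Ordinal} {F G : Ordinal → Ordinal} {a b c : Ordinal}

theorem dom_mapK : dom (mapK F A) = F '' dom A := (image_union F A.L A.C).symm

theorem mapK_lt_iff (hA : memK A) (hF : InjOn F (dom A)) (ha : a ∈ dom A) (hb : b ∈ dom A) :
    (mapK F A).lt (F a) (F b) ↔ A.lt a b := by
  constructor
  · rintro ⟨a', ha', b', hb', hFa, hFb, hlt⟩
    rwa [hF (Or.inl ha') ha hFa, hF (Or.inl hb') hb hFb] at hlt
  · intro hlt
    exact ⟨a, (hA.mem_L_of_lt hlt).1, b, (hA.mem_L_of_lt hlt).2, rfl, rfl, hlt⟩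

theorem mapK_R_iff (hA : memK A) (hF : InjOn F (dom A)) (ha : a ∈ dom A) (hc : c ∈ dom A) :
    (mapK F A).R (F a) (F c) ↔ A.R a c := by
  constructor
  · rintro ⟨a', ha', c', hc', hFa, hFc, hR⟩
    rwa [hF (Or.inl ha') ha hFa, hF (Or.inr hc') hc hFc] at hR
  · intro hR
    exact ⟨a, (hA.mem_of_R hR).1, c, (hA.mem_of_R hR).2, rfl, rfl, hR⟩

theorem memK_mapK (hA : memK A) (hF : InjOn F (dom A)) : memK (mapK F A) := by
  have hlt {a b} (ha : a ∈ A.L) (hb : b ∈ A.L) := mapK_lt_iff hA hF (Or.inl ha) (Or.inl hb)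
  have hR {a c} (ha : a ∈ A.L) (hc : c ∈ A.C) := mapK_R_iff hA hF (Or.inl ha) (Or.inr hc)
  refine ⟨?_, ?_, ?_, ?_, ?_, ?_, ?_, ?_, ?_, ?_⟩
  · refine eq_empty_of_forall_notMem ?_
    rintro _ ⟨⟨a, ha, rfl⟩, c, hc, hca⟩
    exact hA.notMem_C ha (hF (Or.inr hc) (Or.inl ha) hca ▸ hc)
  · rintro _ _ ⟨a, ha, b, hb, rfl, rfl, -⟩
    exact ⟨mem_image_of_mem F ha, mem_image_of_mem F hb⟩
  · rintro _ ⟨a, ha, rfl⟩ h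
    exact hA.lt_irrefl a ((hlt ha ha).1 h)
  · rintro _ _ _ ⟨a, ha, b, hb, rfl, rfl, hab⟩ ⟨b', hb', c, hc, hbb', rfl, hbc⟩
    rw [hF (Or.inl hb') (Or.inl hb) hbb'] at hbc
    exact ⟨a, ha, c, hc, rfl, rfl, hA.lt_trans hab hbc⟩
  · rintro _ ⟨a, ha, rfl⟩ _ ⟨b, hb, rfl⟩ hne
    exact (hA.lt_or_gt_of_ne ha hb (ne_of_apply_ne F hne)).imp (hlt ha hb).2 (hlt hb ha).2
  · rintro _ _ ⟨a, ha, b, hb, rfl, rfl, hab⟩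
    obtain ⟨z, haz, hzb⟩ := hA.exists_between hab
    have hz := (hA.mem_L_of_lt haz).2
    exact ⟨F z, (hlt ha hz).2 haz, (hlt hz hb).2 hzb⟩
  · rintro _ ⟨a, ha, rfl⟩
    obtain ⟨b, hab⟩ := hA.exists_gt ha
    exact ⟨F b, (hlt ha (hA.mem_L_of_lt hab).2).2 hab⟩
  · rintro _ ⟨a, ha, rfl⟩
    obtain ⟨b, hba⟩ := hA.exists_lt ha
    exact ⟨F b, (hlt (hA.mem_L_of_lt hba).1 ha).2 hba⟩
  · rintro _ _ ⟨a, ha, c, hc, rfl, rfl, -⟩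
    exact ⟨mem_image_of_mem F ha, mem_image_of_mem F hc⟩
  · rintro _ ⟨c, hc, rfl⟩
    obtain ⟨⟨x, hx⟩, ⟨y, hy, hyc⟩, hnomax, hnomin, hdown⟩ := hA.cut hc
    have hRc {a} (ha : a ∈ A.L) := hR ha hc
    refine ⟨⟨F x, (hRc (hA.mem_of_R hx).1).2 hx⟩, ⟨F y, mem_image_of_mem F hy,
      fun h => hyc ((hRc hy).1 h)⟩, ?_, ?_, ?_⟩
    · rintro _ ⟨a, ha, c', hc', rfl, hcc', hac⟩
      rw [hF (Or.inr hc') (Or.inr hc) hcc'] at hac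
      obtain ⟨z, hzc, haz⟩ := hnomax a hac
      have hz := (hA.mem_of_R hzc).1
      exact ⟨F z, (hRc hz).2 hzc, (hlt ha hz).2 haz⟩
    · rintro _ ⟨a, ha, rfl⟩ hac
      obtain ⟨z, hz, hzc, hza⟩ := hnomin a ha fun h => hac ((hRc ha).2 h)
      exact ⟨F z, mem_image_of_mem F hz, fun h => hzc ((hRc hz).1 h), (hlt hz ha).2 hza⟩
    · rintro _ _ ⟨b, hb, c', hc', rfl, hcc', hbc⟩ ⟨a, ha, b', hb', rfl, hbb', hab⟩
      rw [hF (Or.inr hc') (Or.inr hc) hcc'] at hbc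
      rw [hF (Or.inl hb') (Or.inl hb) hbb'] at hab
      exact (hRc ha).2 (hdown a b hbc hab)

theorem mapK_mapK : mapK G (mapK F A) = mapK (G ∘ F) A := by
  ext
  · simp [mapK, image_image]
  · simp [mapK, image_image]
  · simp only [mapK, mem_image, comp_apply]
    constructor
    · rintro ⟨_, ⟨a, ha, rfl⟩, _, ⟨b, hb, rfl⟩, rfl, rfl, a', ha', b', hb', hFa, hFb, hlt⟩
      exact ⟨a', ha', b', hb', by rw [hFa], by rw [hFb], hlt⟩
    · rintro ⟨a, ha, b, hb, rfl, rfl, hlt⟩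
      exact ⟨F a, ⟨a, ha, rfl⟩, F b, ⟨b, hb, rfl⟩, rfl, rfl, a, ha, b, hb, rfl, rfl, hlt⟩
  · simp only [mapK, mem_image, comp_apply]
    constructor
    · rintro ⟨_, ⟨a, ha, rfl⟩, _, ⟨c, hc, rfl⟩, rfl, rfl, a', ha', c', hc', hFa, hFc, hR⟩
      exact ⟨a', ha', c', hc', by rw [hFa], by rw [hFc], hR⟩
    · rintro ⟨a, ha, c, hc, rfl, rfl, hR⟩
      exact ⟨F a, ⟨a, ha, rfl⟩, F c, ⟨c, hc, rfl⟩, rfl, rfl, a, ha, c, hc, rfl, rfl, hR⟩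

theorem strongSub_mapK (hA : memK A) (hB : memK B) (hAB : strongSub A B)
    (hF : InjOn F (dom B)) : strongSub (mapK F A) (mapK F B) := by
  have hFA : InjOn F (dom A) := hF.mono hAB.dom_subset
  have hltB {a b} (ha : a ∈ B.L) (hb : b ∈ B.L) := mapK_lt_iff hB hF (Or.inl ha) (Or.inl hb)
  have hRA {a c} (ha : a ∈ A.L) (hc : c ∈ A.C) := mapK_R_iff hA hFA (Or.inl ha) (Or.inr hc)
  have hRB {a c} (ha : a ∈ B.L) (hc : c ∈ B.C) := mapK_R_iff hB hF (Or.inl ha) (Or.inr hc)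
  refine ⟨image_mono hAB.L_subset, image_mono hAB.C_subset, ?_, ?_, ?_, ?_, ?_⟩
  · rintro _ ⟨a, ha, rfl⟩ _ ⟨b, hb, rfl⟩
    rw [mapK_lt_iff hA hFA (Or.inl ha) (Or.inl hb), hltB (hAB.L_subset ha) (hAB.L_subset hb)]
    exact hAB.lt_iff ha hb
  · rintro _ ⟨a, ha, rfl⟩ _ ⟨c, hc, rfl⟩
    rw [hRA ha hc, hRB (hAB.L_subset ha) (hAB.C_subset hc)]
    exact hAB.R_iff ha hc
  · rintro _ ⟨c, hc, rfl⟩ x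
    constructor
    · rintro ⟨b, hb, c', hc', rfl, hcc', hbc⟩
      rw [hF (Or.inr hc') (Or.inr (hAB.C_subset hc)) hcc'] at hbc
      obtain ⟨-, z, hzc, hbz⟩ := (hAB.R_iff_exists hc).1 hbc
      have hz := (hA.mem_of_R hzc).1
      exact ⟨mem_image_of_mem F hb, F z, (hRA hz hc).2 hzc, (hltB hb (hAB.L_subset hz)).2 hbz⟩
    · rintro ⟨⟨b, hb, rfl⟩, _, ⟨z, hz, c', hc', rfl, hcc', hzc⟩, hbz⟩
      rw [hFA (Or.inr hc') (Or.inr hc) hcc'] at hzc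
      have hbz := (hltB hb (hAB.L_subset hz)).1 hbz
      exact (hRB hb (hAB.C_subset hc)).2 ((hAB.R_iff_exists hc).2 ⟨hb, z, hzc, hbz⟩)
  · rintro _ ⟨c, hc, rfl⟩ _ ⟨b, hb, rfl⟩
    rw [not_congr (hRB hb (hAB.C_subset hc)), hAB.not_R_iff_exists hc hb]
    constructor
    · rintro ⟨z, hz, hzc, hzb⟩
      exact ⟨F z, mem_image_of_mem F hz, fun h => hzc ((hRA hz hc).1 h),
        (hltB (hAB.L_subset hz) hb).2 hzb⟩
    · rintro ⟨_, ⟨z, hz, rfl⟩, hzc, hzb⟩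
      exact ⟨z, hz, fun h => hzc ((hRA hz hc).2 h), (hltB (hAB.L_subset hz) hb).1 hzb⟩
  · rintro _ ⟨c, hc, rfl⟩ hcA
    obtain ⟨u, v, hu, hv, hvc, hbd⟩ :=
      hAB.exists_bounds_of_notMem hc fun h => hcA (mem_image_of_mem F h)
    have hu' := (hB.mem_of_R hu).1
    refine ⟨F u, F v, (hRB hu' hc).2 hu, mem_image_of_mem F hv, fun h => hvc ((hRB hv hc).1 h),
      ?_⟩
    rintro _ ⟨a, ha, rfl⟩
    exact (hbd a ha).imp (hltB (hAB.L_subset ha) hu').2 (hltB hv (hAB.L_subset ha)).2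

end Map

structure Iso (h : Ordinal → Ordinal) (X Y : KStr Ordinal) : Prop where
  bijOn_L : BijOn h X.L Y.L
  bijOn_C : BijOn h X.C Y.C
  lt_iff : ∀ a ∈ X.L, ∀ b ∈ X.L, X.lt a b ↔ Y.lt (h a) (h b)
  R_iff : ∀ a ∈ X.L, ∀ c ∈ X.C, X.R a c ↔ Y.R (h a) (h c)

structure IsStrongEmb (h : Ordinal → Ordinal) (X Y : KStr Ordinal) : Prop where
  injOn : InjOn h (dom X)
  strongSub_map : strongSub (mapK h X) Y

section Morphisms

variable {X Y Z : KStr Ordinal} {h g : Ordinal → Ordinal} {a b c : Ordinal}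

theorem Iso.refl : Iso id X X :=
  ⟨bijOn_id _, bijOn_id _, fun _ _ _ _ => Iff.rfl, fun _ _ _ _ => Iff.rfl⟩

theorem Iso.congr (e : Iso h X Y) (hg : EqOn h g (dom X)) : Iso g X Y where
  bijOn_L := e.bijOn_L.congr fun a ha => hg (Or.inl ha)
  bijOn_C := e.bijOn_C.congr fun a ha => hg (Or.inr ha)
  lt_iff a ha b hb := by rw [← hg (Or.inl ha), ← hg (Or.inl hb)]; exact e.lt_iff a ha b hb
  R_iff a ha c hc := by rw [← hg (Or.inl ha), ← hg (Or.inr hc)]; exact e.R_iff a ha c hc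

theorem Iso.injOn (e : Iso h X Y) (hY : memK Y) : InjOn h (dom X) := by
  rintro a (ha | ha) b (hb | hb) hab
  · exact e.bijOn_L.injOn ha hb hab
  · exact absurd (hab ▸ e.bijOn_C.mapsTo hb) (hY.notMem_C (e.bijOn_L.mapsTo ha))
  · exact absurd (hab ▸ e.bijOn_C.mapsTo ha) (hY.notMem_C (e.bijOn_L.mapsTo hb))
  · exact e.bijOn_C.injOn ha hb hab

theorem Iso.mapK_eq (e : Iso h X Y) (hY : memK Y) : mapK h X = Y := by
  ext x y
  · exact e.bijOn_L.image_eq ▸ Iff.rfl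
  · exact e.bijOn_C.image_eq ▸ Iff.rfl
  · constructor
    · rintro ⟨a, ha, b, hb, rfl, rfl, hab⟩
      exact (e.lt_iff a ha b hb).1 hab
    · intro hxy
      obtain ⟨a, ha, rfl⟩ := e.bijOn_L.surjOn (hY.mem_L_of_lt hxy).1
      obtain ⟨b, hb, rfl⟩ := e.bijOn_L.surjOn (hY.mem_L_of_lt hxy).2
      exact ⟨a, ha, b, hb, rfl, rfl, (e.lt_iff a ha b hb).2 hxy⟩
  · constructor
    · rintro ⟨a, ha, c, hc, rfl, rfl, hac⟩
      exact (e.R_iff a ha c hc).1 hac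
    · intro hxy
      obtain ⟨a, ha, rfl⟩ := e.bijOn_L.surjOn (hY.mem_of_R hxy).1
      obtain ⟨c, hc, rfl⟩ := e.bijOn_C.surjOn (hY.mem_of_R hxy).2
      exact ⟨a, ha, c, hc, rfl, rfl, (e.R_iff a ha c hc).2 hxy⟩

theorem Iso.isStrongEmb (e : Iso h X Y) (hY : memK Y) : IsStrongEmb h X Y :=
  ⟨e.injOn hY, by rw [e.mapK_eq hY]; exact strongSub_refl hY⟩

theorem mapK_eq_self (hX : memK X) (hh : EqOn h id (dom X)) : mapK h X = X :=
  (Iso.refl.congr hh.symm).mapK_eq hX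

theorem IsStrongEmb.mapsTo_L (e : IsStrongEmb h X Y) : MapsTo h X.L Y.L := fun _ ha =>
  e.strongSub_map.L_subset (mem_image_of_mem h ha)

theorem IsStrongEmb.mapsTo_C (e : IsStrongEmb h X Y) : MapsTo h X.C Y.C := fun _ hc =>
  e.strongSub_map.C_subset (mem_image_of_mem h hc)

theorem IsStrongEmb.mapsTo_dom (e : IsStrongEmb h X Y) : MapsTo h (dom X) (dom Y) :=
  e.mapsTo_L.union_union e.mapsTo_C

theorem IsStrongEmb.lt_iff (e : IsStrongEmb h X Y) (hX : memK X) (ha : a ∈ X.L) (hb : b ∈ X.L) :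
    X.lt a b ↔ Y.lt (h a) (h b) :=
  (mapK_lt_iff hX e.injOn (Or.inl ha) (Or.inl hb)).symm.trans
    (e.strongSub_map.lt_iff (mem_image_of_mem h ha) (mem_image_of_mem h hb))

theorem IsStrongEmb.R_iff (e : IsStrongEmb h X Y) (hX : memK X) (ha : a ∈ X.L) (hc : c ∈ X.C) :
    X.R a c ↔ Y.R (h a) (h c) :=
  (mapK_R_iff hX e.injOn (Or.inl ha) (Or.inr hc)).symm.trans
    (e.strongSub_map.R_iff (mem_image_of_mem h ha) (mem_image_of_mem h hc))

theorem IsStrongEmb.mem_L_of_apply_mem (e : IsStrongEmb h X Y) (hY : memK Y) (ha : a ∈ dom X)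
    (hha : h a ∈ Y.L) : a ∈ X.L :=
  ha.resolve_right fun hc => hY.notMem_C hha (e.mapsTo_C hc)

theorem IsStrongEmb.mem_C_of_apply_mem (e : IsStrongEmb h X Y) (hY : memK Y) (ha : a ∈ dom X)
    (hha : h a ∈ Y.C) : a ∈ X.C :=
  ha.resolve_left fun hl => hY.notMem_C (e.mapsTo_L hl) hha

theorem IsStrongEmb.trans_strongSub (e : IsStrongEmb h X Y) (hX : memK X) (hY : memK Y)
    (hZ : memK Z) (hYZ : strongSub Y Z) : IsStrongEmb h X Z :=
  ⟨e.injOn, e.strongSub_map.trans (memK_mapK hX e.injOn) hY hZ hYZ⟩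

end Morphisms

end KStr

open KStr

structure IsKChain (κ : Ordinal) (A : Ordinal → KStr Ordinal) : Prop where
  memK_of_le : ∀ i ≤ κ, memK (A i)
  strongSub_of_lt : ∀ i j, i < j → j ≤ κ → strongSub (A i) (A j)

theorem chainSpec.isKChain {κ : Ordinal} {f : Ordinal → Ordinal} {A : Ordinal → KStr Ordinal}
    (hA : chainSpec κ f A) : IsKChain κ A :=
  ⟨hA.1, hA.2.1⟩

theorem chainSpec.mk_dom_lt {κ i : Ordinal} {f : Ordinal → Ordinal}
    {A : Ordinal → KStr Ordinal} (hA : chainSpec κ f A) (hi : i < κ) :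
    Cardinal.mk (dom (A i)) < Cardinal.lift.{1, 0} κ.card :=
  hA.2.2.1 i hi

section Chain

variable {κ δ i j r : Ordinal} {A : Ordinal → KStr Ordinal} {x y : Ordinal}

theorem mem_unionChain_L : x ∈ (unionChain A δ).L ↔ ∃ j < δ, x ∈ (A j).L := by
  simp [unionChain]

theorem mem_unionChain_C : x ∈ (unionChain A δ).C ↔ ∃ j < δ, x ∈ (A j).C := by
  simp [unionChain]

theorem dom_subset_dom_unionChain (hr : r < δ) : dom (A r) ⊆ dom (unionChain A δ) :=
  union_subset_union (fun _ hx => mem_unionChain_L.2 ⟨r, hr, hx⟩)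
    fun _ hx => mem_unionChain_C.2 ⟨r, hr, hx⟩

theorem IsKChain.strongSub_of_le (hA : IsKChain κ A) (hij : i ≤ j) (hj : j ≤ κ) :
    strongSub (A i) (A j) := by
  rcases hij.lt_or_eq with hij | rfl
  · exact hA.strongSub_of_lt i j hij hj
  · exact strongSub_refl (hA.memK_of_le i hj)

theorem IsKChain.unionChain_lt_iff (hA : IsKChain κ A) (hδ : δ ≤ κ) (hr : r < δ)
    (hx : x ∈ (A r).L) (hy : y ∈ (A r).L) : (unionChain A δ).lt x y ↔ (A r).lt x y := by
  refine ⟨fun ⟨s, hs, hxy⟩ => ?_, fun hxy => ⟨r, hr, hxy⟩⟩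
  obtain ⟨hxs, hys⟩ := (hA.memK_of_le s (hs.le.trans hδ)).mem_L_of_lt hxy
  rcases le_total r s with hrs | hsr
  · exact ((hA.strongSub_of_le hrs (hs.le.trans hδ)).lt_iff hx hy).2 hxy
  · exact ((hA.strongSub_of_le hsr (hr.le.trans hδ)).lt_iff hxs hys).1 hxy

theorem IsKChain.unionChain_R_iff (hA : IsKChain κ A) (hδ : δ ≤ κ) (hr : r < δ)
    (hx : x ∈ (A r).L) (hy : y ∈ (A r).C) : (unionChain A δ).R x y ↔ (A r).R x y := by
  refine ⟨fun ⟨s, hs, hxy⟩ => ?_, fun hxy => ⟨r, hr, hxy⟩⟩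
  obtain ⟨hxs, hys⟩ := (hA.memK_of_le s (hs.le.trans hδ)).mem_of_R hxy
  rcases le_total r s with hrs | hsr
  · exact ((hA.strongSub_of_le hrs (hs.le.trans hδ)).R_iff hx hy).2 hxy
  · exact ((hA.strongSub_of_le hsr (hr.le.trans hδ)).R_iff hxs hys).1 hxy

theorem IsKChain.unionChain_lt_iff_self (hA : IsKChain κ A) (hδ : δ ≤ κ)
    (hx : x ∈ (unionChain A δ).L) (hy : y ∈ (unionChain A δ).L) :
    (unionChain A δ).lt x y ↔ (A δ).lt x y := by
  obtain ⟨r₁, hr₁, hx⟩ := mem_unionChain_L.1 hx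
  obtain ⟨r₂, hr₂, hy⟩ := mem_unionChain_L.1 hy
  have hr : max r₁ r₂ < δ := max_lt hr₁ hr₂
  have hsub r' (hr' : r' ≤ max r₁ r₂) := (hA.strongSub_of_le hr' (hr.le.trans hδ)).L_subset
  have hx := hsub r₁ (le_max_left _ _) hx
  have hy := hsub r₂ (le_max_right _ _) hy
  rw [hA.unionChain_lt_iff hδ hr hx hy]
  exact (hA.strongSub_of_le hr.le hδ).lt_iff hx hy

theorem IsKChain.unionChain_R_iff_self (hA : IsKChain κ A) (hδ : δ ≤ κ)
    (hx : x ∈ (unionChain A δ).L) (hy : y ∈ (unionChain A δ).C) :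
    (unionChain A δ).R x y ↔ (A δ).R x y := by
  obtain ⟨r₁, hr₁, hx⟩ := mem_unionChain_L.1 hx
  obtain ⟨r₂, hr₂, hy⟩ := mem_unionChain_C.1 hy
  have hr : max r₁ r₂ < δ := max_lt hr₁ hr₂
  have hx := (hA.strongSub_of_le (le_max_left _ _) (hr.le.trans hδ)).L_subset hx
  have hy := (hA.strongSub_of_le (le_max_right r₁ r₂) (hr.le.trans hδ)).C_subset hy
  rw [hA.unionChain_R_iff hδ hr hx hy]
  exact (hA.strongSub_of_le hr.le hδ).R_iff hx hy

end Chain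

theorem isQtimesRevBlock.exists_bijOn {ltP ltQ : Ordinal → Ordinal → Prop} {P Q : Set Ordinal}
    {δ : Ordinal} (hP : isQtimesRevBlock ltP P δ) (hQ : isQtimesRevBlock ltQ Q δ) :
    ∃ m, BijOn m P Q ∧ ∀ a ∈ P, ∀ b ∈ P, ltP a b ↔ ltQ (m a) (m b) := by
  obtain ⟨eP, hePbij, heP⟩ := hP
  obtain ⟨eQ, heQbij, heQ⟩ := hQ
  have hinv := heQbij.invOn_invFunOn
  have hm := (heQbij.symm hinv.symm).comp hePbij
  refine ⟨_, hm, fun a ha b hb => ?_⟩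
  rw [heP a ha b hb, heQ _ (hm.mapsTo ha) _ (hm.mapsTo hb), comp_apply, comp_apply,
    hinv.2 (hePbij.mapsTo ha), hinv.2 (hePbij.mapsTo hb)]

theorem chainSpec.exists_iso_zero {κ : Ordinal} {f g : Ordinal → Ordinal}
    {A B : Ordinal → KStr Ordinal} (hA : chainSpec κ f A) (hB : chainSpec κ g B) :
    ∃ m, Iso m (A 0) (B 0) := by
  obtain ⟨-, -, -, ⟨hAC, hAblock⟩, -⟩ := hA
  obtain ⟨-, -, -, ⟨hBC, hBblock⟩, -⟩ := hB
  obtain ⟨m, hm, hmlt⟩ := hAblock.exists_bijOn hBblock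
  refine ⟨m, hm, ?_, hmlt, fun _ _ c hc => ?_⟩
  · rw [hAC, hBC]
    exact bijOn_empty m
  · exact absurd hc (hAC ▸ notMem_empty c)

structure IsTopExtension (U X : KStr Ordinal) (P : Set Ordinal) (x : Ordinal) : Prop where
  L_eq : X.L = U.L ∪ P
  disjoint : Disjoint U.L P
  C_eq : X.C = insert x U.C
  notMem : x ∉ U.C
  lt_iff : ∀ a ∈ U.L, ∀ b ∈ U.L, U.lt a b ↔ X.lt a b
  R_iff : ∀ a ∈ U.L, ∀ c ∈ U.C, U.R a c ↔ X.R a c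
  lt_of_mem : ∀ a ∈ U.L, ∀ b ∈ P, X.lt a b
  not_R : ∀ b ∈ P, ∀ c ∈ U.C, ¬ X.R b c
  R_iff_mem : ∀ a, X.R a x ↔ a ∈ U.L

section TopExtension

variable {U V X Y : KStr Ordinal} {P Q : Set Ordinal} {x y : Ordinal}
  {H m : Ordinal → Ordinal}

theorem IsTopExtension.disjoint_dom (hX : memK X) (hXU : IsTopExtension U X P x) :
    Disjoint (dom U) P ∧ x ∉ dom U ∧ x ∉ P := by
  have hxX : x ∈ X.C := hXU.C_eq ▸ mem_insert x U.C
  have hUX : U.L ⊆ X.L := hXU.L_eq ▸ subset_union_left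
  have hPX : P ⊆ X.L := hXU.L_eq ▸ subset_union_right
  refine ⟨disjoint_union_left.2 ⟨hXU.disjoint, disjoint_left.2 fun c hc hcP => ?_⟩,
    fun hx => hx.elim (fun hxU => hX.notMem_C (hUX hxU) hxX) hXU.notMem,
    fun hxP => hX.notMem_C (hPX hxP) hxX⟩
  exact hX.notMem_C (hPX hcP) (hXU.C_eq ▸ mem_insert_of_mem x hc)

theorem IsTopExtension.bijOn_L_of_eqOn (hXU : IsTopExtension U X P x)
    (hYV : IsTopExtension V Y Q y) (e : Iso H U V) (hm : BijOn m P Q) {H' : Ordinal → Ordinal}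
    (hH : EqOn H H' U.L) (hmH : EqOn m H' P) : BijOn H' X.L Y.L := by
  rw [hXU.L_eq, hYV.L_eq]
  refine (e.bijOn_L.congr hH).union (hm.congr hmH) ((injOn_union hXU.disjoint).2
    ⟨(e.bijOn_L.congr hH).injOn, (hm.congr hmH).injOn, fun a ha b hb hab => ?_⟩)
  rw [← hH ha, ← hmH hb] at hab
  exact disjoint_left.1 hYV.disjoint (e.bijOn_L.mapsTo ha) (hab ▸ hm.mapsTo hb)

theorem IsTopExtension.lt_iff_of_eqOn (hX : memK X) (hY : memK Y) (hXU : IsTopExtension U X P x)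
    (hYV : IsTopExtension V Y Q y) (e : Iso H U V) (hm : BijOn m P Q)
    (hmlt : ∀ a ∈ P, ∀ b ∈ P, X.lt a b ↔ Y.lt (m a) (m b)) {H' : Ordinal → Ordinal}
    (hH : EqOn H H' U.L) (hmH : EqOn m H' P) {a b : Ordinal} (ha : a ∈ X.L) (hb : b ∈ X.L) :
    X.lt a b ↔ Y.lt (H' a) (H' b) := by
  rw [hXU.L_eq] at ha hb
  rcases ha with ha | ha <;> rcases hb with hb | hb
  · rw [← hH ha, ← hH hb, ← hXU.lt_iff a ha b hb, e.lt_iff a ha b hb]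
    exact hYV.lt_iff _ (e.bijOn_L.mapsTo ha) _ (e.bijOn_L.mapsTo hb)
  · rw [← hH ha, ← hmH hb]
    exact iff_of_true (hXU.lt_of_mem a ha b hb)
      (hYV.lt_of_mem _ (e.bijOn_L.mapsTo ha) _ (hm.mapsTo hb))
  · rw [← hmH ha, ← hH hb]
    exact iff_of_false (hX.lt_asymm (hXU.lt_of_mem b hb a ha))
      (hY.lt_asymm (hYV.lt_of_mem _ (e.bijOn_L.mapsTo hb) _ (hm.mapsTo ha)))
  · rw [← hmH ha, ← hmH hb]
    exact hmlt a ha b hb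

theorem IsTopExtension.R_iff_of_eqOn (hXU : IsTopExtension U X P x)
    (hYV : IsTopExtension V Y Q y) (e : Iso H U V) (hm : BijOn m P Q) {H' : Ordinal → Ordinal}
    (hH : EqOn H H' (dom U)) (hmH : EqOn m H' P) (hx : H' x = y) {a c : Ordinal}
    (ha : a ∈ X.L) (hc : c ∈ X.C) : X.R a c ↔ Y.R (H' a) (H' c) := by
  have hHL : EqOn H H' U.L := hH.mono subset_union_left
  rw [hXU.C_eq] at hc
  rw [hXU.L_eq] at ha
  rcases hc with rfl | hc
  · rw [hx, hXU.R_iff_mem, hYV.R_iff_mem]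
    rcases ha with ha | ha
    · exact iff_of_true ha (hHL ha ▸ e.bijOn_L.mapsTo ha)
    · refine iff_of_false (disjoint_right.1 hXU.disjoint ha) fun h => ?_
      exact disjoint_left.1 hYV.disjoint h (hmH ha ▸ hm.mapsTo ha)
  · rw [← hH (Or.inr hc)]
    rcases ha with ha | ha
    · rw [← hHL ha, ← hXU.R_iff a ha c hc, e.R_iff a ha c hc]
      exact hYV.R_iff _ (e.bijOn_L.mapsTo ha) _ (e.bijOn_C.mapsTo hc)
    · rw [← hmH ha]
      exact iff_of_false (hXU.not_R a ha c hc)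
        (hYV.not_R _ (hm.mapsTo ha) _ (e.bijOn_C.mapsTo hc))

open Classical in
theorem KStr.Iso.extend (hX : memK X) (hY : memK Y) (hXU : IsTopExtension U X P x)
    (hYV : IsTopExtension V Y Q y) (e : Iso H U V) (hm : BijOn m P Q)
    (hmlt : ∀ a ∈ P, ∀ b ∈ P, X.lt a b ↔ Y.lt (m a) (m b)) :
    ∃ H', Iso H' X Y ∧ EqOn H H' (dom U) := by
  obtain ⟨hUP, hxU, hxP⟩ := hXU.disjoint_dom hX
  obtain ⟨H', hH, hmH, hx⟩ : ∃ H', EqOn H H' (dom U) ∧ EqOn m H' P ∧ H' x = y :=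
    ⟨(dom U).piecewise H (P.piecewise m fun _ => y),
      fun a ha => (piecewise_eq_of_mem _ _ _ ha).symm,
      fun a ha => by
        rw [piecewise_eq_of_notMem _ _ _ (disjoint_right.1 hUP ha), piecewise_eq_of_mem _ _ _ ha],
      by rw [piecewise_eq_of_notMem _ _ _ hxU, piecewise_eq_of_notMem _ _ _ hxP]⟩
  have hHL : EqOn H H' U.L := hH.mono subset_union_left
  have hbijC : BijOn H' X.C Y.C := by
    rw [hXU.C_eq, hYV.C_eq, ← hx]
    exact (e.bijOn_C.congr (hH.mono subset_union_right)).insert (hx ▸ hYV.notMem)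
  exact ⟨H', ⟨hXU.bijOn_L_of_eqOn hYV e hm hHL hmH, hbijC,
    fun a ha b hb => hXU.lt_iff_of_eqOn hX hY hYV e hm hmlt hHL hmH ha hb,
    fun a ha c hc => hXU.R_iff_of_eqOn hYV e hm hH hmH hx ha hc⟩, hH⟩

end TopExtension

theorem chainSpec.isTopExtension {κ δ : Ordinal} {f : Ordinal → Ordinal}
    {A : Ordinal → KStr Ordinal} (hA : chainSpec κ f A) (hδ : δ < κ)
    (hlim : Order.IsSuccLimit δ) :
    ∃ x, IsTopExtension (unionChain A δ) (A δ) ((A δ).L \ (unionChain A δ).L) x ∧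
      isQtimesRevBlock (A δ).lt ((A δ).L \ (unionChain A δ).L) (f δ) := by
  obtain ⟨⟨x, hxU, hxC, hxR⟩, htop, hblock⟩ := hA.2.2.2.2.1 δ hδ hlim
  have hA' := hA.isKChain
  have hUL : (unionChain A δ).L ⊆ (A δ).L := fun a ha => by
    obtain ⟨r, hr, ha⟩ := mem_unionChain_L.1 ha
    exact (hA'.strongSub_of_le hr.le hδ.le).L_subset ha
  refine ⟨x, ⟨(union_sdiff_cancel hUL).symm, disjoint_sdiff_right, hxC.trans (union_singleton),
    hxU, fun a ha b hb => hA'.unionChain_lt_iff_self hδ.le ha hb,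
    fun a ha c hc => hA'.unionChain_R_iff_self hδ.le ha hc,
    fun a ha b hb => htop b hb a ha, fun b hb c hc hbc => ?_, hxR⟩, hblock⟩
  obtain ⟨r, hr, hc⟩ := mem_unionChain_C.1 hc
  obtain ⟨-, z, hzc, hbz⟩ := ((hA'.strongSub_of_le hr.le hδ.le).R_iff_exists hc).1 hbc
  have hz : z ∈ (unionChain A δ).L :=
    mem_unionChain_L.2 ⟨r, hr, ((hA'.memK_of_le r (hr.le.trans hδ.le)).mem_of_R hzc).1⟩
  exact (hA'.memK_of_le δ hδ.le).lt_asymm hbz (htop b hb z hz)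

theorem chainSpec.exists_iso_extend {κ δ : Ordinal} {f g H : Ordinal → Ordinal}
    {A B : Ordinal → KStr Ordinal} (hA : chainSpec κ f A) (hB : chainSpec κ g B) (hδ : δ < κ)
    (hlim : Order.IsSuccLimit δ) (hfg : f δ = g δ)
    (e : Iso H (unionChain A δ) (unionChain B δ)) :
    ∃ H', Iso H' (A δ) (B δ) ∧ EqOn H H' (dom (unionChain A δ)) := by
  obtain ⟨x, hAx, hAblock⟩ := hA.isTopExtension hδ hlim
  obtain ⟨y, hBy, hBblock⟩ := hB.isTopExtension hδ hlim
  obtain ⟨m, hm, hmlt⟩ := hAblock.exists_bijOn (hfg ▸ hBblock)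
  exact e.extend (hA.isKChain.memK_of_le δ hδ.le) (hB.isKChain.memK_of_le δ hδ.le) hAx hBy hm
    hmlt

theorem bddAbove_of_mk_lt_lift {s : Set Ordinal.{0}} {c : Cardinal.{0}}
    (hs : Cardinal.mk s < Cardinal.lift.{1} c) : BddAbove s :=
  Ordinal.bddAbove_iff_small.2 <| Cardinal.small_iff_lift_mk_lt_univ.2 <| by
    simpa using hs.trans (Cardinal.lift_lt_univ' c)

open Classical in
theorem exists_injective_leftInvOn {s : Set Ordinal.{u}} (hs : BddAbove s)
    {h : Ordinal.{u} → Ordinal.{u}} (hh : InjOn h s) : ∃ e, Injective e ∧ LeftInvOn e h s := by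
  obtain ⟨β, hβ⟩ := hs
  have hinv {x} (hx : x ∈ h '' s) : invFunOn h s x ∈ s ∧ h (invFunOn h s x) = x :=
    ⟨invFunOn_mem hx, invFunOn_eq hx⟩
  have hshift (x : Ordinal) : β + 1 + x ∉ s := fun hx =>
    (hβ hx).not_gt ((Order.lt_add_one_iff.2 le_rfl).trans_le le_self_add)
  refine ⟨(h '' s).piecewise (invFunOn h s) (β + 1 + ·), fun x y hxy => ?_,
    fun a ha => ?_⟩
  · by_cases hx : x ∈ h '' s <;> by_cases hy : y ∈ h '' s <;>
      simp only [piecewise_eq_of_mem, piecewise_eq_of_notMem, hx, hy, not_false_eq_true] at hxy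
    · rw [← (hinv hx).2, ← (hinv hy).2, hxy]
    · exact absurd (hxy ▸ (hinv hx).1) (hshift y)
    · exact absurd (hxy ▸ (hinv hy).1) (hshift x)
    · exact add_left_cancel hxy
  · rw [piecewise_eq_of_mem _ _ _ (mem_image_of_mem h ha)]
    exact hh.leftInvOn_invFunOn ha

theorem chainSpec.exists_isStrongEmb_leftInvOn {κ i : Ordinal.{0}} {f h : Ordinal → Ordinal}
    {A : Ordinal → KStr Ordinal} {B : KStr Ordinal} (hA : chainSpec κ f A) (hi : i < κ)
    (hB : memK B) (hBκ : Cardinal.mk (dom B) < Cardinal.lift.{1, 0} κ.card)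
    (hh : IsStrongEmb h (A i) B) :
    ∃ k, i ≤ k ∧ k < κ ∧ ∃ q, IsStrongEmb q B (A k) ∧ LeftInvOn q h (dom (A i)) := by
  have hAi := hA.isKChain.memK_of_le i hi.le
  obtain ⟨e, he, heh⟩ :=
    exists_injective_leftInvOn (bddAbove_of_mk_lt_lift (hA.mk_dom_lt hi)) hh.injOn
  have hAe : strongSub (A i) (mapK e B) := by
    have := strongSub_mapK (memK_mapK hAi hh.injOn) hB hh.strongSub_map he.injOn
    rwa [mapK_mapK, mapK_eq_self (h := e ∘ h) hAi heh] at this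
  have heB : Cardinal.mk (dom (mapK e B)) < Cardinal.lift.{1, 0} κ.card :=
    dom_mapK ▸ Cardinal.mk_image_le.trans_lt hBκ
  obtain ⟨k, hik, hk, F, hF, hFid, hFsub⟩ :=
    hA.2.2.2.2.2.2 i hi (mapK e B) (memK_mapK hB he.injOn) hAe heB
  refine ⟨k, hik, hk, F ∘ e, ⟨hF.comp he.injOn fun x hx => ?_, mapK_mapK ▸ hFsub⟩,
    fun a ha => ?_⟩
  · exact dom_mapK ▸ mem_image_of_mem e hx
  · rw [comp_apply, heh ha]
    exact hFid ha

noncomputable def chooseRec {α : Type*} [Nonempty α]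
    (P : (ν : Ordinal.{u}) → (Iio ν → α) → α → Prop) : Ordinal.{u} → α :=
  Ordinal.lt_wf.fix fun ν rec => Classical.epsilon (P ν fun μ => rec μ μ.2)

theorem chooseRec_spec {α : Type*} [Nonempty α] {P : (ν : Ordinal.{u}) → (Iio ν → α) → α → Prop}
    {κ : Ordinal.{u}}
    (hP : ∀ ν < κ, (∀ μ < ν, P μ (fun ξ => chooseRec P ξ) (chooseRec P μ)) →
      ∃ s, P ν (fun μ => chooseRec P μ) s) :
    ∀ ν < κ, P ν (fun μ => chooseRec P μ) (chooseRec P ν) := by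
  intro ν
  induction ν using WellFoundedLT.induction with
  | _ ν ih =>
    intro hν
    rw [chooseRec, Ordinal.lt_wf.fix_eq]
    exact Classical.epsilon_spec (hP ν hν fun μ hμ => ih μ hμ (hμ.trans hν))

theorem exists_isSuccLimit_mem_of_interleaved {c : Cardinal.{u}} (hc : c.IsRegular)
    {Cl : Set Ordinal.{u}} (hCl : closedIn Cl c.ord) {ν : Ordinal.{u}} (hν : ν < c.ord)
    (hlim : Order.IsSuccLimit ν) {a b : Ordinal.{u} → Ordinal.{u}}
    (hνa : ∀ μ < ν, μ ≤ a μ) (hab : ∀ μ < ν, a μ ≤ b μ) (hba : ∀ μ < ν, b μ < a (μ + 1))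
    (hbc : ∀ μ < ν, b μ < c.ord) (hbCl : ∀ μ < ν, b μ ∈ Cl) :
    ∃ δ < c.ord, δ ∈ Cl ∧ Order.IsSuccLimit δ ∧ ν ≤ δ ∧ (∀ μ < ν, b μ < δ) ∧
      ∀ r < δ, ∃ μ < ν, r ≤ a μ := by
  set δ := ⨆ μ : Iio ν, a μ
  have hle μ (hμ : μ < ν) : a μ ≤ δ := Ordinal.le_iSup (fun μ : Iio ν => a μ) ⟨μ, hμ⟩
  have hb μ (hμ : μ < ν) : b μ < δ := (hba μ hμ).trans_le (hle _ (hlim.add_one_lt hμ))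
  have hcof r (hr : r < δ) : ∃ μ < ν, r < a μ := by
    obtain ⟨⟨μ, hμ⟩, hr⟩ := Ordinal.lt_iSup_iff.1 hr
    exact ⟨μ, hμ, hr⟩
  have hνδ : ν ≤ δ := le_of_forall_lt fun μ hμ =>
    (Order.lt_add_one_iff.2 le_rfl).trans_le
      ((hνa _ (hlim.add_one_lt hμ)).trans (hle _ (hlim.add_one_lt hμ)))
  have hδc : δ < c.ord := by
    refine Ordinal.lift_iSup_lt_of_lt_cof ?_ fun μ => (hab μ μ.2).trans_lt (hbc μ μ.2)
    rwa [← Ordinal.lift_cof, hc.cof_ord, Cardinal.mk_Iio_ordinal, Cardinal.lift_lift,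
      Cardinal.lift_lt, ← Cardinal.lt_ord]
  have hδ0 : 0 < δ := hlim.bot_lt.trans_le hνδ
  refine ⟨δ, hδc, hCl δ hδc hδ0 fun β hβ => ?_,
    Ordinal.isSuccLimit_iff.2 ⟨hδ0.ne', Order.isSuccPrelimit_of_succ_lt fun r hr => ?_⟩,
    hνδ, hb, fun r hr => ?_⟩
  · obtain ⟨μ, hμ, hβμ⟩ := hcof β hβ
    exact ⟨b μ, hbCl μ hμ, hβμ.le.trans (hab μ hμ), hb μ hμ⟩
  · obtain ⟨μ, hμ, hrμ⟩ := hcof r hr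
    exact (Order.succ_le_of_lt hrμ).trans_lt ((hab μ hμ).trans_lt (hb μ hμ))
  · obtain ⟨μ, hμ, hrμ⟩ := hcof r hr
    exact ⟨μ, hμ, hrμ.le⟩

namespace BackForth

structure State where
  src : Ordinal.{u}
  tgt : Ordinal.{u}
  emb : Ordinal.{u} → Ordinal.{u}

instance : Nonempty State.{u} := ⟨⟨0, 0, id⟩⟩

section

variable {κ δ ν : Ordinal.{u}} {Cl : Set Ordinal.{u}} {A B : Ordinal.{u} → KStr Ordinal.{u}}

structure State.Precedes (A B : Ordinal.{u} → KStr Ordinal.{u}) (s t : State.{u}) : Prop where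
  tgt_lt_src : s.tgt < t.src
  eqOn : EqOn s.emb t.emb (dom (A s.src))
  dom_subset_image : dom (B s.tgt) ⊆ t.emb '' dom (A t.src)

theorem State.Precedes.trans {s₁ s₂ s₃ : State.{u}} (hA : IsKChain κ A) (h₁ : s₁.src ≤ s₁.tgt)
    (h₂ : s₂.src ≤ s₂.tgt) (h₃ : s₃.src ≤ κ) (h₁₂ : s₁.Precedes A B s₂)
    (h₂₃ : s₂.Precedes A B s₃) : s₁.Precedes A B s₃ := by
  have hsrc₁₂ : s₁.src ≤ s₂.src := h₁.trans h₁₂.tgt_lt_src.le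
  have hsrc₂₃ : s₂.src ≤ s₃.src := h₂.trans h₂₃.tgt_lt_src.le
  refine ⟨h₁₂.tgt_lt_src.trans_le (h₂.trans h₂₃.tgt_lt_src.le),
    h₁₂.eqOn.trans (h₂₃.eqOn.mono (hA.strongSub_of_le hsrc₁₂ (hsrc₂₃.trans h₃)).dom_subset),
    h₁₂.dom_subset_image.trans ?_⟩
  rw [h₂₃.eqOn.image_eq]
  exact image_mono (hA.strongSub_of_le hsrc₂₃ h₃).dom_subset

structure IsExhausting (A B : Ordinal.{u} → KStr Ordinal.{u}) (δ ν : Ordinal.{u})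
    (F : Ordinal.{u} → State.{u}) : Prop where
  isSuccLimit : Order.IsSuccLimit ν
  src_le_tgt : ∀ μ < ν, (F μ).src ≤ (F μ).tgt
  isStrongEmb : ∀ μ < ν, IsStrongEmb (F μ).emb (A (F μ).src) (B (F μ).tgt)
  precedes : ∀ μ' < ν, ∀ μ < μ', (F μ).Precedes A B (F μ')
  tgt_lt : ∀ μ < ν, (F μ).tgt < δ
  cofinal : ∀ r < δ, ∃ μ < ν, r ≤ (F μ).src

namespace IsExhausting

variable {F : Ordinal.{u} → State.{u}} {H : Ordinal.{u} → Ordinal.{u}}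

theorem src_lt (hF : IsExhausting A B δ ν F) {μ : Ordinal} (hμ : μ < ν) : (F μ).src < δ :=
  (hF.src_le_tgt μ hμ).trans_lt (hF.tgt_lt μ hμ)

open Classical in
theorem exists_eqOn (hF : IsExhausting A B δ ν F) :
    ∃ H, ∀ μ < ν, EqOn (F μ).emb H (dom (A (F μ).src)) := by
  refine ⟨fun x => if hx : ∃ μ < ν, x ∈ dom (A (F μ).src) then (F hx.choose).emb x else x,
    fun μ hμ x hx => ?_⟩
  have hx' : ∃ μ < ν, x ∈ dom (A (F μ).src) := ⟨μ, hμ, hx⟩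
  obtain ⟨hμ', hx''⟩ := hx'.choose_spec
  dsimp only
  rw [dif_pos hx']
  rcases lt_trichotomy μ hx'.choose with h | h | h
  · exact (hF.precedes _ hμ' μ h).eqOn hx
  · rw [h]
  · exact ((hF.precedes μ hμ _ h).eqOn hx'').symm

theorem exists_strongSub (hF : IsExhausting A B δ ν F) (hA : IsKChain κ A) (hδ : δ ≤ κ)
    {r₁ r₂ : Ordinal} (hr₁ : r₁ < δ) (hr₂ : r₂ < δ) :
    ∃ μ < ν, strongSub (A r₁) (A (F μ).src) ∧ strongSub (A r₂) (A (F μ).src) := by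
  obtain ⟨μ, hμ, hr⟩ := hF.cofinal _ (max_lt hr₁ hr₂)
  have hFκ := (hF.src_lt hμ).le.trans hδ
  exact ⟨μ, hμ, hA.strongSub_of_le ((le_max_left _ _).trans hr) hFκ,
    hA.strongSub_of_le ((le_max_right _ _).trans hr) hFκ⟩

theorem exists_dom_subset_image (hF : IsExhausting A B δ ν F) (hB : IsKChain κ B) (hδ : δ ≤ κ)
    {r : Ordinal} (hr : r < δ) : ∃ μ < ν,
    strongSub (B r) (B (F μ).tgt) ∧ dom (B r) ⊆ (F μ).emb '' dom (A (F μ).src) := by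
  obtain ⟨μ, hμ, hrμ⟩ := hF.cofinal r hr
  have hμ' : μ + 1 < ν := hF.isSuccLimit.add_one_lt hμ
  have hprec := hF.precedes _ hμ' μ (Order.lt_add_one_iff.2 le_rfl)
  have hrμ : r ≤ (F μ).tgt := hrμ.trans (hF.src_le_tgt μ hμ)
  refine ⟨μ + 1, hμ', hB.strongSub_of_le
    (hrμ.trans (hprec.tgt_lt_src.le.trans (hF.src_le_tgt _ hμ'))) ((hF.tgt_lt _ hμ').le.trans hδ),
    ?_⟩
  exact (hB.strongSub_of_le hrμ ((hF.tgt_lt μ hμ).le.trans hδ)).dom_subset.trans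
    hprec.dom_subset_image

theorem bijOn_L (hF : IsExhausting A B δ ν F) (hA : IsKChain κ A) (hB : IsKChain κ B)
    (hδ : δ ≤ κ) (hH : ∀ μ < ν, EqOn (F μ).emb H (dom (A (F μ).src))) :
    BijOn H (unionChain A δ).L (unionChain B δ).L := by
  refine ⟨fun x hx => ?_, fun x hx y hy hxy => ?_, fun y hy => ?_⟩
  · obtain ⟨r, hr, hx⟩ := mem_unionChain_L.1 hx
    obtain ⟨μ, hμ, hsub, -⟩ := hF.exists_strongSub hA hδ hr hr
    rw [← hH μ hμ (Or.inl (hsub.L_subset hx))]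
    exact mem_unionChain_L.2 ⟨_, hF.tgt_lt μ hμ, (hF.isStrongEmb μ hμ).mapsTo_L (hsub.L_subset hx)⟩
  · obtain ⟨r₁, hr₁, hx⟩ := mem_unionChain_L.1 hx
    obtain ⟨r₂, hr₂, hy⟩ := mem_unionChain_L.1 hy
    obtain ⟨μ, hμ, hsub₁, hsub₂⟩ := hF.exists_strongSub hA hδ hr₁ hr₂
    have hx : x ∈ dom (A (F μ).src) := Or.inl (hsub₁.L_subset hx)
    have hy : y ∈ dom (A (F μ).src) := Or.inl (hsub₂.L_subset hy)
    rw [← hH μ hμ hx, ← hH μ hμ hy] at hxy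
    exact (hF.isStrongEmb μ hμ).injOn hx hy hxy
  · obtain ⟨r, hr, hy⟩ := mem_unionChain_L.1 hy
    obtain ⟨μ, hμ, hsub, hcov⟩ := hF.exists_dom_subset_image hB hδ hr
    obtain ⟨a, ha, rfl⟩ := hcov (Or.inl hy)
    have haL := (hF.isStrongEmb μ hμ).mem_L_of_apply_mem
      (hB.memK_of_le _ ((hF.tgt_lt μ hμ).le.trans hδ)) ha (hsub.L_subset hy)
    exact ⟨a, mem_unionChain_L.2 ⟨_, hF.src_lt hμ, haL⟩, (hH μ hμ ha).symm⟩

theorem bijOn_C (hF : IsExhausting A B δ ν F) (hA : IsKChain κ A) (hB : IsKChain κ B)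
    (hδ : δ ≤ κ) (hH : ∀ μ < ν, EqOn (F μ).emb H (dom (A (F μ).src))) :
    BijOn H (unionChain A δ).C (unionChain B δ).C := by
  refine ⟨fun x hx => ?_, fun x hx y hy hxy => ?_, fun y hy => ?_⟩
  · obtain ⟨r, hr, hx⟩ := mem_unionChain_C.1 hx
    obtain ⟨μ, hμ, hsub, -⟩ := hF.exists_strongSub hA hδ hr hr
    rw [← hH μ hμ (Or.inr (hsub.C_subset hx))]
    exact mem_unionChain_C.2 ⟨_, hF.tgt_lt μ hμ, (hF.isStrongEmb μ hμ).mapsTo_C (hsub.C_subset hx)⟩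
  · obtain ⟨r₁, hr₁, hx⟩ := mem_unionChain_C.1 hx
    obtain ⟨r₂, hr₂, hy⟩ := mem_unionChain_C.1 hy
    obtain ⟨μ, hμ, hsub₁, hsub₂⟩ := hF.exists_strongSub hA hδ hr₁ hr₂
    have hx : x ∈ dom (A (F μ).src) := Or.inr (hsub₁.C_subset hx)
    have hy : y ∈ dom (A (F μ).src) := Or.inr (hsub₂.C_subset hy)
    rw [← hH μ hμ hx, ← hH μ hμ hy] at hxy
    exact (hF.isStrongEmb μ hμ).injOn hx hy hxy
  · obtain ⟨r, hr, hy⟩ := mem_unionChain_C.1 hy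
    obtain ⟨μ, hμ, hsub, hcov⟩ := hF.exists_dom_subset_image hB hδ hr
    obtain ⟨a, ha, rfl⟩ := hcov (Or.inr hy)
    have haC := (hF.isStrongEmb μ hμ).mem_C_of_apply_mem
      (hB.memK_of_le _ ((hF.tgt_lt μ hμ).le.trans hδ)) ha (hsub.C_subset hy)
    exact ⟨a, mem_unionChain_C.2 ⟨_, hF.src_lt hμ, haC⟩, (hH μ hμ ha).symm⟩

theorem exists_iso (hF : IsExhausting A B δ ν F) (hA : IsKChain κ A) (hB : IsKChain κ B)
    (hδ : δ ≤ κ) : ∃ H, Iso H (unionChain A δ) (unionChain B δ) ∧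
    ∀ μ < ν, EqOn (F μ).emb H (dom (A (F μ).src)) := by
  obtain ⟨H, hH⟩ := hF.exists_eqOn
  refine ⟨H, ⟨hF.bijOn_L hA hB hδ hH, hF.bijOn_C hA hB hδ hH, fun a ha b hb => ?_,
    fun a ha c hc => ?_⟩, hH⟩
  · obtain ⟨r₁, hr₁, ha⟩ := mem_unionChain_L.1 ha
    obtain ⟨r₂, hr₂, hb⟩ := mem_unionChain_L.1 hb
    obtain ⟨μ, hμ, hsub₁, hsub₂⟩ := hF.exists_strongSub hA hδ hr₁ hr₂
    have ha := hsub₁.L_subset ha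
    have hb := hsub₂.L_subset hb
    have he := hF.isStrongEmb μ hμ
    rw [hA.unionChain_lt_iff hδ (hF.src_lt hμ) ha hb, ← hH μ hμ (Or.inl ha),
      ← hH μ hμ (Or.inl hb), hB.unionChain_lt_iff hδ (hF.tgt_lt μ hμ) (he.mapsTo_L ha)
      (he.mapsTo_L hb)]
    exact he.lt_iff (hA.memK_of_le _ ((hF.src_lt hμ).le.trans hδ)) ha hb
  · obtain ⟨r₁, hr₁, ha⟩ := mem_unionChain_L.1 ha
    obtain ⟨r₂, hr₂, hc⟩ := mem_unionChain_C.1 hc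
    obtain ⟨μ, hμ, hsub₁, hsub₂⟩ := hF.exists_strongSub hA hδ hr₁ hr₂
    have ha := hsub₁.L_subset ha
    have hc := hsub₂.C_subset hc
    have he := hF.isStrongEmb μ hμ
    rw [hA.unionChain_R_iff hδ (hF.src_lt hμ) ha hc, ← hH μ hμ (Or.inl ha),
      ← hH μ hμ (Or.inr hc), hB.unionChain_R_iff hδ (hF.tgt_lt μ hμ) (he.mapsTo_L ha)
      (he.mapsTo_C hc)]
    exact he.R_iff (hA.memK_of_le _ ((hF.src_lt hμ).le.trans hδ)) ha hc

end IsExhausting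

structure State.IsValid (A B : Ordinal.{u} → KStr Ordinal.{u}) (κ : Ordinal.{u})
    (Cl : Set Ordinal.{u}) (s : State.{u}) : Prop where
  tgt_lt : s.tgt < κ
  tgt_mem : s.tgt ∈ Cl
  src_le_tgt : s.src ≤ s.tgt
  isStrongEmb : IsStrongEmb s.emb (A s.src) (B s.tgt)

structure Admissible (A B : Ordinal.{u} → KStr Ordinal.{u}) (κ : Ordinal.{u})
    (Cl : Set Ordinal.{u}) (ν : Ordinal.{u}) (prev : Iio ν → State.{u}) (s : State.{u}) :
    Prop where
  isValid : s.IsValid A B κ Cl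
  le_src : ν ≤ s.src
  precedes : ∀ μ, (prev μ).Precedes A B s

theorem isExhausting_of_admissible {F : Ordinal.{u} → State.{u}}
    (hF : ∀ μ < ν, Admissible A B κ Cl μ (fun ξ => F ξ) (F μ)) (hν : Order.IsSuccLimit ν)
    (htgt : ∀ μ < ν, (F μ).tgt < δ) (hcof : ∀ r < δ, ∃ μ < ν, r ≤ (F μ).src) :
    IsExhausting A B δ ν F :=
  ⟨hν, fun μ hμ => (hF μ hμ).isValid.src_le_tgt, fun μ hμ => (hF μ hμ).isValid.isStrongEmb,
    fun _ hμ' μ hμ => (hF _ hμ').precedes ⟨μ, hμ⟩, htgt, hcof⟩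

end

section

variable {κ : Ordinal.{0}} {Cl : Set Ordinal.{0}} {f g : Ordinal.{0} → Ordinal.{0}}
  {A B : Ordinal.{0} → KStr Ordinal.{0}}

theorem exists_admissible_zero (hA : chainSpec κ f A) (hB : chainSpec κ g B)
    (hCl : unboundedIn Cl κ) (hκ : 0 < κ) (prev : Iio (0 : Ordinal) → State) :
    ∃ s, Admissible A B κ Cl 0 prev s := by
  obtain ⟨m, hm⟩ := hA.exists_iso_zero hB
  obtain ⟨j, hjCl, -, hj⟩ := hCl 0 hκ
  have hB' := hB.isKChain
  refine ⟨⟨0, j, m⟩, ⟨hj, hjCl, zero_le, ?_⟩, le_rfl,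
    fun μ => absurd μ.2 (not_lt_zero (a := μ.1))⟩
  exact (hm.isStrongEmb (hB'.memK_of_le 0 hκ.le)).trans_strongSub
    (hA.isKChain.memK_of_le 0 hκ.le) (hB'.memK_of_le 0 hκ.le) (hB'.memK_of_le j hj.le)
    (hB'.strongSub_of_le zero_le hj.le)

theorem exists_precedes (hA : chainSpec κ f A) (hB : chainSpec κ g B) (hCl : unboundedIn Cl κ)
    (hκ : Order.IsSuccLimit κ) {s : State} (hs : s.IsValid A B κ Cl) {β : Ordinal}
    (hβ : β < κ) : ∃ t : State, t.IsValid A B κ Cl ∧ β ≤ t.src ∧ s.Precedes A B t := by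
  have hA' := hA.isKChain
  have hB' := hB.isKChain
  have hsrc : s.src < κ := hs.src_le_tgt.trans_lt hs.tgt_lt
  obtain ⟨k, -, hk, q, hq, hqs⟩ := hA.exists_isStrongEmb_leftInvOn hsrc
    (hB'.memK_of_le _ hs.tgt_lt.le) (hB.mk_dom_lt hs.tgt_lt) hs.isStrongEmb
  set m := max k (max (s.tgt + 1) β)
  have hm : m < κ := max_lt hk (max_lt (hκ.add_one_lt hs.tgt_lt) hβ)
  have hqm : IsStrongEmb q (B s.tgt) (A m) :=
    hq.trans_strongSub (hB'.memK_of_le _ hs.tgt_lt.le) (hA'.memK_of_le k hk.le)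
      (hA'.memK_of_le m hm.le) (hA'.strongSub_of_le (le_max_left _ _) hm.le)
  obtain ⟨l, -, hl, h, hh, hhq⟩ := hB.exists_isStrongEmb_leftInvOn hs.tgt_lt
    (hA'.memK_of_le m hm.le) (hA.mk_dom_lt hm) hqm
  obtain ⟨j, hjCl, hlmj, hj⟩ := hCl (max l m) (max_lt hl hm)
  refine ⟨⟨m, j, h⟩, ⟨hj, hjCl, (le_max_right _ _).trans hlmj, ?_⟩,
    (le_max_right _ _).trans (le_max_right _ _), ⟨?_, fun a ha => ?_, fun b hb => ?_⟩⟩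
  · exact hh.trans_strongSub (hA'.memK_of_le m hm.le) (hB'.memK_of_le l hl.le)
      (hB'.memK_of_le j hj.le) (hB'.strongSub_of_le ((le_max_left _ _).trans hlmj) hj.le)
  · exact (Order.lt_add_one_iff.2 le_rfl).trans_le
      ((le_max_left _ _).trans (le_max_right _ _))
  · rw [← hhq (hs.isStrongEmb.mapsTo_dom ha), hqs ha]
  · exact ⟨q b, hqm.mapsTo_dom hb, hhq hb⟩

theorem exists_admissible_succ (hA : chainSpec κ f A) (hB : chainSpec κ g B)
    (hCl : unboundedIn Cl κ) (hκ : Order.IsSuccLimit κ) {ρ : Ordinal} {F : Ordinal → State}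
    (hF : ∀ μ < ρ + 1, Admissible A B κ Cl μ (fun ξ => F ξ) (F μ)) :
    ∃ s, Admissible A B κ Cl (ρ + 1) (fun μ => F μ) s := by
  have hρ1 : ρ < ρ + 1 := Order.lt_add_one_iff.2 le_rfl
  have hρ := hF ρ hρ1
  obtain ⟨t, ht, hρt, hpt⟩ := exists_precedes hA hB hCl hκ hρ.isValid
    (hκ.add_one_lt (hρ.le_src.trans_lt (hρ.isValid.src_le_tgt.trans_lt hρ.isValid.tgt_lt)))
  refine ⟨t, ht, hρt, fun ⟨μ, hμ⟩ => ?_⟩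
  rcases (Order.lt_add_one_iff.1 (mem_Iio.1 hμ)).lt_or_eq with hμ | rfl
  · exact (hρ.precedes ⟨μ, hμ⟩).trans hA.isKChain (hF μ (hμ.trans hρ1)).isValid.src_le_tgt
      hρ.isValid.src_le_tgt (ht.src_le_tgt.trans ht.tgt_lt.le) hpt
  · exact hpt

theorem exists_admissible_of_isSuccLimit {c : Cardinal.{0}} (hc : c.IsRegular)
    (hA : chainSpec c.ord f A) (hB : chainSpec c.ord g B) (hCl : closedIn Cl c.ord)
    (hfg : ∀ α ∈ Cl, f α = g α) {ν : Ordinal} (hν : ν < c.ord) (hlim : Order.IsSuccLimit ν)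
    {F : Ordinal → State} (hF : ∀ μ < ν, Admissible A B c.ord Cl μ (fun ξ => F ξ) (F μ)) :
    ∃ s, Admissible A B c.ord Cl ν (fun μ => F μ) s := by
  have hprec μ (hμ : μ < ν) := (hF _ (hlim.add_one_lt hμ)).precedes
    ⟨μ, mem_Iio.2 (Order.lt_add_one_iff.2 le_rfl)⟩
  obtain ⟨δ, hδ, hδCl, hδlim, hνδ, htgt, hcof⟩ := exists_isSuccLimit_mem_of_interleaved hc hCl
    hν hlim (fun μ hμ => (hF μ hμ).le_src) (fun μ hμ => (hF μ hμ).isValid.src_le_tgt)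
    (fun μ hμ => (hprec μ hμ).tgt_lt_src) (fun μ hμ => (hF μ hμ).isValid.tgt_lt)
    (fun μ hμ => (hF μ hμ).isValid.tgt_mem)
  have hex := isExhausting_of_admissible hF hlim htgt hcof
  obtain ⟨H, hH, hHF⟩ := hex.exists_iso hA.isKChain hB.isKChain hδ.le
  obtain ⟨H', hH', hHH'⟩ := hA.exists_iso_extend hB hδ hδlim (hfg δ hδCl) hH
  refine ⟨⟨δ, δ, H'⟩, ⟨hδ, hδCl, le_rfl, hH'.isStrongEmb (hB.isKChain.memK_of_le δ hδ.le)⟩,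
    hνδ, fun ⟨μ, hμ⟩ => ⟨htgt μ hμ, ?_, ?_⟩⟩
  · exact (hHF μ hμ).trans (hHH'.mono (dom_subset_dom_unionChain (hex.src_lt hμ)))
  · have hμ' := hlim.add_one_lt hμ
    refine (hprec μ hμ).dom_subset_image.trans ?_
    rw [((hHF _ hμ').trans (hHH'.mono (dom_subset_dom_unionChain (hex.src_lt hμ')))).image_eq]
    exact image_mono (hA.isKChain.strongSub_of_le (hex.src_lt hμ').le hδ.le).dom_subset

theorem exists_iso_unionChain {c : Cardinal.{0}} (hc : c.IsRegular) (hA : chainSpec c.ord f A)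
    (hB : chainSpec c.ord g B) (hCl : clubIn Cl c.ord) (hfg : ∀ α ∈ Cl, f α = g α) :
    ∃ H, Iso H (unionChain A c.ord) (unionChain B c.ord) := by
  have hκ : Order.IsSuccLimit c.ord := Cardinal.isSuccLimit_ord hc.aleph0_le
  set F := chooseRec (Admissible A B c.ord Cl)
  have hF : ∀ ν < c.ord, Admissible A B c.ord Cl ν (fun μ => F μ) (F ν) := by
    refine chooseRec_spec fun ν hν ih => ?_
    rcases Ordinal.zero_or_succ_or_isSuccLimit ν with rfl | ⟨ρ, rfl⟩ | hlim
    · exact exists_admissible_zero hA hB hCl.1 hκ.bot_lt _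
    · rw [Order.succ_eq_add_one] at ih ⊢
      exact exists_admissible_succ hA hB hCl.1 hκ ih
    · exact exists_admissible_of_isSuccLimit hc hA hB hCl.2 hfg hν hlim ih
  obtain ⟨H, hH, -⟩ := (isExhausting_of_admissible hF hκ (fun μ hμ => (hF μ hμ).isValid.tgt_lt)
    fun r hr => ⟨r, hr, (hF r hr).le_src⟩).exists_iso hA.isKChain hB.isKChain le_rfl
  exact ⟨H, hH⟩

end

end BackForth

theorem club_agreement_isomorphic_general (κ : Cardinal) (hκ : κ.IsInaccessible)
    (f g : Ordinal → Ordinal)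
    (Af Ag : Ordinal → KStr Ordinal)
    (hAf : chainSpec κ.ord f Af) (hAg : chainSpec κ.ord g Ag)
    (hclub : ∃ Cl, clubIn Cl κ.ord ∧ ∀ α ∈ Cl, f α = g α) :
    ∃ h : Ordinal → Ordinal, Set.BijOn h (Af κ.ord).L (Ag κ.ord).L ∧
      ∀ x ∈ (Af κ.ord).L, ∀ y ∈ (Af κ.ord).L,
        ((Af κ.ord).lt x y ↔ (Ag κ.ord).lt (h x) (h y)) := by
  obtain ⟨Cl, hCl, hfg⟩ := hclub
  obtain ⟨H, hH⟩ := BackForth.exists_iso_unionChain hκ.isRegular hAf hAg hCl hfg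
  have hLf : (Af κ.ord).L = (unionChain Af κ.ord).L := hAf.2.2.2.2.2.1.1
  have hLg : (Ag κ.ord).L = (unionChain Ag κ.ord).L := hAg.2.2.2.2.2.1.1
  refine ⟨H, hLf ▸ hLg ▸ hH.bijOn_L, fun x hx y hy => ?_⟩
  rw [hLf] at hx hy
  rw [← hAf.isKChain.unionChain_lt_iff_self le_rfl hx hy, hH.lt_iff x hx y hy]
  exact hAg.isKChain.unionChain_lt_iff_self le_rfl (hH.bijOn_L.mapsTo hx) (hH.bijOn_L.mapsTo hy)

/-- If `f, g : κ → reg(κ)` agree on a club of the inaccessible `κ`, then the dense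
linear orders `A^f = (L^{A^f_κ}, <)` and `A^g = (L^{A^g_κ}, <)` obtained from the
construction are isomorphic. -/
theorem club_agreement_isomorphic (κ : Cardinal) (hκ : κ.IsInaccessible)
    (f g : Ordinal → Ordinal)
    (hf : ∀ i < κ.ord, f i ∈ regSet κ.ord) (hg : ∀ i < κ.ord, g i ∈ regSet κ.ord)
    (Af Ag : Ordinal → KStr Ordinal)
    (hAf : chainSpec κ.ord f Af) (hAg : chainSpec κ.ord g Ag)
    (hclub : ∃ Cl, clubIn Cl κ.ord ∧ ∀ α ∈ Cl, f α = g α) :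
    ∃ h : Ordinal → Ordinal, Set.BijOn h (Af κ.ord).L (Ag κ.ord).L ∧
      ∀ x ∈ (Af κ.ord).L, ∀ y ∈ (Af κ.ord).L,
        ((Af κ.ord).lt x y ↔ (Ag κ.ord).lt (h x) (h y)) :=
  club_agreement_isomorphic_general κ hκ f g Af Ag hAf hAg hclub

end GDST
end
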